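/- arXiv:2209.06974 — 2 statements merged into one kernel-verified Lean document; each statement's English description precedes it below -/
import Mathlib

section
/- Let A be a row-stochastic matrix compatible with a strongly connected directed graph G (positive diagonal, A_{ij} > 0 iff (j,i) ∈ E or j = i), φ a stochastic vector, and π a nonnegative vector with πᵀA = φᵀ. For vectors x_1,...,x_n ∈ R^p, set z_i = Σ_j A_{ij} x_j and x̂_φ = Σ_j φ_j x_j. Then for all u ∈ R^p: Σ_i π_i ‖z_i − u‖² ≤ Σ_j φ_j ‖x_j − u‖² − [min(π)·(min(A⁺))² / (max(φ)²·D(G)·K(G))] · Σ_j φ_j ‖x_j − x̂_φ‖², where min(A⁺) is the smallest positive entry of A. -/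
open scoped Classical

/-- `w` is a directed walk in the graph with edge relation `E`, starting at `j`
and ending at `l`. -/
def IsWalkFromTo {n : ℕ} (E : Fin n → Fin n → Prop) (w : List (Fin n)) (j l : Fin n) : Prop :=
  w.head? = some j ∧ w.getLast? = some l ∧ w.Chain' E

/-- A directed graph is strongly connected if every ordered pair of nodes is
joined by a directed walk. -/
def StronglyConnectedDigraph {n : ℕ} (E : Fin n → Fin n → Prop) : Prop :=
  ∀ j l : Fin n, ∃ w : List (Fin n), IsWalkFromTo E w j l

/-- The shortest-path distance from `j` to `l` (number of edges). -/
noncomputable def graphDist {n : ℕ} (E : Fin n → Fin n → Prop) (j l : Fin n) : ℕ :=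
  sInf {m | ∃ w : List (Fin n), IsWalkFromTo E w j l ∧ w.length = m + 1}

/-- The diameter: the longest among the shortest directed paths connecting
ordered pairs of distinct nodes. -/
noncomputable def graphDiam {n : ℕ} (E : Fin n → Fin n → Prop) : ℕ :=
  sSup {d | ∃ j l : Fin n, j ≠ l ∧ graphDist E j l = d}

/-- The edge `(a, b)` appears (consecutively) in the walk `w`. -/
def edgeInWalk {n : ℕ} (a b : Fin n) (w : List (Fin n)) : Prop :=
  (a, b) ∈ w.zip w.tail

/-- `P` assigns to every ordered pair of distinct nodes a shortest directed path
between them. -/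
def IsShortestPathCovering {n : ℕ} (E : Fin n → Fin n → Prop)
    (P : Fin n → Fin n → List (Fin n)) : Prop :=
  ∀ j l : Fin n, j ≠ l →
    IsWalkFromTo E (P j l) j l ∧ (P j l).length = graphDist E j l + 1

/-- The utility of the edge `(a, b)` with respect to the covering `P`: the
number of paths of `P` passing through `(a, b)`. -/
noncomputable def edgeUtility {n : ℕ} (P : Fin n → Fin n → List (Fin n)) (a b : Fin n) : ℕ :=
  (Finset.univ.filter fun q : Fin n × Fin n => q.1 ≠ q.2 ∧ edgeInWalk a b (P q.1 q.2)).card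

/-- The maximum edge-utility of a covering `P`, over all edges of the graph. -/
noncomputable def coveringMaxUtility {n : ℕ} (E : Fin n → Fin n → Prop)
    (P : Fin n → Fin n → List (Fin n)) : ℕ :=
  (Finset.univ.filter fun q : Fin n × Fin n => E q.1 q.2).sup fun q => edgeUtility P q.1 q.2

/-- The maximal edge-utility `K(G)`: the maximum of `K(P)` over all
shortest-path coverings `P`. -/
noncomputable def maxEdgeUtility {n : ℕ} (E : Fin n → Fin n → Prop) : ℕ :=
  sSup {u | ∃ P : Fin n → Fin n → List (Fin n),
    IsShortestPathCovering E P ∧ coveringMaxUtility E P = u}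

/-- The smallest positive entry of a matrix. -/
noncomputable def minPosEntry {n : ℕ} (A : Matrix (Fin n) (Fin n) ℝ) : ℝ :=
  sInf {v : ℝ | 0 < v ∧ ∃ i j, A i j = v}



section lists
variable {α : Type*} {Ed : α → α → Prop}

lemma edge_of_mem_zip : ∀ {w : List α} {a b : α}, List.Chain' Ed w → (a, b) ∈ w.zip w.tail → Ed a b
  | [], _, _, _, h => by simp at h
  | [_], _, _, _, h => by simp at h
  | x :: y :: t, a, b, hc, h => by
    replace hc := List.isChain_cons_cons.1 hc
    simp only [List.tail_cons, List.zip_cons_cons, List.mem_cons] at h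
    rcases h with h | h
    · cases h; exact hc.1
    · exact edge_of_mem_zip hc.2 h

lemma zip_tail_nodup : ∀ {w : List α}, w.Nodup → (w.zip w.tail).Nodup
  | [], _ => by simp
  | [_], _ => by simp
  | x :: y :: t, h => by
    simp only [List.nodup_cons, List.mem_cons] at h
    simp only [List.tail_cons, List.zip_cons_cons, List.nodup_cons]
    refine ⟨fun hmem => ?_, zip_tail_nodup (List.nodup_cons.2 ⟨h.2.1, h.2.2⟩)⟩
    have := (List.of_mem_zip hmem).1
    exact h.1 (List.mem_cons.1 this)

lemma telescope {V : Type*} [AddCommGroup V] (x : α → V) :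
    ∀ {w : List α} {j l : α}, w.head? = some j → w.getLast? = some l →
      ((w.zip w.tail).map (fun q => x q.1 - x q.2)).sum = x j - x l
  | [], j, l, h, _ => by simp at h
  | [a], j, l, h, h' => by
    simp only [List.head?_cons, Option.some.injEq] at h
    simp only [List.getLast?_singleton, Option.some.injEq] at h'
    subst h; subst h'; simp
  | a :: b :: t, j, l, h, h' => by
    simp only [List.head?_cons, Option.some.injEq] at h
    subst h
    rw [List.getLast?_cons_cons] at h'
    have ih := telescope x (w := b :: t) (j := b) (l := l) rfl h'
    simp only [List.tail_cons, List.zip_cons_cons, List.map_cons, List.sum_cons] at ih ⊢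
    rw [ih]; abel
end lists

section surgery
variable {n : ℕ} {E : Fin n → Fin n → Prop}

lemma walk_length_pos {w : List (Fin n)} {j l : Fin n} (h : IsWalkFromTo E w j l) :
    0 < w.length := by
  rcases w with _ | ⟨a, t⟩
  · simp [IsWalkFromTo] at h
  · simp

lemma shorten : ∀ {w : List (Fin n)} {j l : Fin n}, IsWalkFromTo E w j l → ¬ w.Nodup →
    ∃ w', IsWalkFromTo E w' j l ∧ w'.length < w.length
  | [], j, l, h, _ => by simp [IsWalkFromTo] at h
  | [a], j, l, h, hnd => by simp at hnd
  | a :: b :: t, j, l, h, hnd => by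
    obtain ⟨h1, h2, h3⟩ := h
    simp only [List.head?_cons, Option.some.injEq] at h1
    subst h1
    rw [List.nodup_cons] at hnd
    push_neg at hnd
    by_cases hat : a ∈ b :: t
    · -- cut: b :: t = t1 ++ a :: t2, new walk a :: t2
      obtain ⟨t1, t2, hsplit⟩ := List.append_of_mem hat
      refine ⟨a :: t2, ⟨by simp, ?_, ?_⟩, ?_⟩
      · rw [show a :: b :: t = (a :: t1) ++ (a :: t2) by rw [hsplit]; simp] at h2
        rw [List.getLast?_append] at h2
        have hs : (a :: t2).getLast?.isSome := (List.getLast?_isSome (l := a :: t2)).2 (by simp)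
        obtain ⟨v, hv⟩ := Option.isSome_iff_exists.1 hs
        rw [hv] at h2 ⊢
        simpa using h2
      · exact h3.suffix ⟨a :: t1, by rw [hsplit]; simp⟩
      · have : (b :: t).length = (t1 ++ a :: t2).length := by rw [hsplit]
        simp at this ⊢
        omega
    · have hndt : ¬ (b :: t).Nodup := hnd hat
      have hwalk : IsWalkFromTo E (b :: t) b l :=
        ⟨by simp, by rw [List.getLast?_cons_cons] at h2; exact h2, (List.isChain_cons_cons.1 h3).2⟩
      obtain ⟨w', ⟨hw1, hw2, hw3⟩, hlen⟩ := shorten hwalk hndt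
      rcases w' with _ | ⟨c, t''⟩
      · simp at hw1
      · simp only [List.head?_cons, Option.some.injEq] at hw1
        subst hw1
        refine ⟨a :: c :: t'', ⟨by simp, ?_, ?_⟩, by simpa using hlen⟩
        · rw [List.getLast?_cons_cons]; exact hw2
        · exact List.isChain_cons_cons.2 ⟨(List.isChain_cons_cons.1 h3).1, hw3⟩

lemma exists_shortest {j l : Fin n} (h : ∃ w, IsWalkFromTo E w j l) :
    ∃ w, IsWalkFromTo E w j l ∧ w.length = graphDist E j l + 1 ∧ w.Nodup := by
  obtain ⟨w, hw⟩ := h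
  have hne : {m | ∃ w : List (Fin n), IsWalkFromTo E w j l ∧ w.length = m + 1}.Nonempty := by
    refine ⟨w.length - 1, w, hw, ?_⟩
    have := walk_length_pos hw; omega
  have hd : graphDist E j l = sInf {m | ∃ w : List (Fin n), IsWalkFromTo E w j l ∧ w.length = m + 1} := rfl
  have hmem := Nat.sInf_mem hne
  obtain ⟨w0, hw0, hlen0⟩ := hmem
  refine ⟨w0, hw0, by omega, ?_⟩
  by_contra hnd
  obtain ⟨w', hw', hlt⟩ := shorten hw0 hnd
  have hmem' : w'.length - 1 ∈ {m | ∃ w : List (Fin n), IsWalkFromTo E w j l ∧ w.length = m + 1} := by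
    refine ⟨w', hw', ?_⟩
    have := walk_length_pos hw'; omega
  have := Nat.sInf_le hmem'
  have := walk_length_pos hw'
  omega
end surgery

section analytic
variable {V : Type*} [NormedAddCommGroup V] [InnerProductSpace ℝ V]

lemma var_ident {n : ℕ} (w : Fin n → ℝ) (hw : ∑ j, w j = 1)
    (x : Fin n → V) (c : V) :
    ∑ j, w j * ‖x j - c‖ ^ 2
      = ∑ j, w j * ‖x j - (∑ l, w l • x l)‖ ^ 2 + ‖(∑ l, w l • x l) - c‖ ^ 2 := by
  set y := ∑ l, w l • x l with hy
  have expand : ∀ j, ‖x j - c‖ ^ 2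
      = ‖x j - y‖ ^ 2 + 2 * inner ℝ (x j - y) (y - c) + ‖y - c‖ ^ 2 := by
    intro j
    have := norm_add_sq_real (x j - y) (y - c)
    rw [sub_add_sub_cancel] at this
    exact this
  have hzero : ∑ j, w j • (x j - y) = 0 := by
    simp only [smul_sub]
    rw [Finset.sum_sub_distrib, ← Finset.sum_smul, hw, one_smul, ← hy, sub_self]
  have hinner : ∑ j, w j * inner ℝ (x j - y) (y - c) = (0 : ℝ) := by
    have : ∑ j, w j * inner ℝ (x j - y) (y - c)
        = inner ℝ (∑ j, w j • (x j - y)) (y - c) := by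
      rw [sum_inner]
      congr 1; ext j
      rw [real_inner_smul_left]
    rw [this, hzero, inner_zero_left]
  calc ∑ j, w j * ‖x j - c‖ ^ 2
      = ∑ j, (w j * ‖x j - y‖ ^ 2 + 2 * (w j * inner ℝ (x j - y) (y - c)) + w j * ‖y - c‖ ^ 2) := by
        apply Finset.sum_congr rfl; intro j _; rw [expand j]; ring
    _ = ∑ j, w j * ‖x j - y‖ ^ 2 + 2 * ∑ j, w j * inner ℝ (x j - y) (y - c)
          + (∑ j, w j) * ‖y - c‖ ^ 2 := by
        rw [Finset.sum_add_distrib, Finset.sum_add_distrib, ← Finset.mul_sum, ← Finset.sum_mul]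
    _ = ∑ j, w j * ‖x j - y‖ ^ 2 + ‖y - c‖ ^ 2 := by rw [hinner, hw]; ring

lemma sq_norm_list_sum_le (L : List V) :
    ‖L.sum‖ ^ 2 ≤ (L.length : ℝ) * (L.map fun v => ‖v‖ ^ 2).sum := by
  have h1 : ‖L.sum‖ ≤ ∑ i : Fin L.length, ‖L.get i‖ := by
    conv_lhs => rw [← List.ofFn_get L]
    rw [List.sum_ofFn]
    exact norm_sum_le _ _
  have h2 : (∑ i : Fin L.length, ‖L.get i‖) ^ 2
      ≤ (L.length : ℝ) * ∑ i : Fin L.length, ‖L.get i‖ ^ 2 := by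
    have := Finset.sum_mul_sq_le_sq_mul_sq Finset.univ (fun _ : Fin L.length => (1 : ℝ))
      (fun i => ‖L.get i‖)
    simpa [Finset.card_univ] using this
  have h3 : (L.map fun v => ‖v‖ ^ 2).sum = ∑ i : Fin L.length, ‖L.get i‖ ^ 2 := by
    conv_lhs => rw [← List.ofFn_get L]
    rw [List.map_ofFn, List.sum_ofFn]
    rfl
  rw [h3]
  calc ‖L.sum‖ ^ 2 ≤ (∑ i : Fin L.length, ‖L.get i‖) ^ 2 := by
        apply pow_le_pow_left₀ (norm_nonneg _) h1
    _ ≤ _ := h2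
end analytic

set_option maxHeartbeats 2000000 in
theorem stmt_10 {n p : ℕ} (E : Fin n → Fin n → Prop)
    (hconn : StronglyConnectedDigraph E)
    (A : Matrix (Fin n) (Fin n) ℝ)
    (hAnn : ∀ i j, 0 ≤ A i j)
    (hArow : ∀ i, ∑ j, A i j = 1)
    (hAcompat : ∀ i j, 0 < A i j ↔ (E j i ∨ j = i))
    (φ : Fin n → ℝ) (hφnn : ∀ j, 0 ≤ φ j) (hφsum : ∑ j, φ j = 1)
    (π : Fin n → ℝ) (hπnn : ∀ i, 0 ≤ π i)
    (hπA : ∀ j, ∑ i, π i * A i j = φ j)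
    (x : Fin n → EuclideanSpace ℝ (Fin p))
    (z : Fin n → EuclideanSpace ℝ (Fin p)) (hz : ∀ i, z i = ∑ j, A i j • x j)
    (u : EuclideanSpace ℝ (Fin p)) :
    ∑ i, π i * ‖z i - u‖ ^ 2 ≤
      (∑ j, φ j * ‖x j - u‖ ^ 2) -
        ((⨅ i, π i) * minPosEntry A ^ 2 /
            ((⨆ j, φ j) ^ 2 * (graphDiam E : ℝ) * (maxEdgeUtility E : ℝ))) *
          ∑ j, φ j * ‖x j - ∑ ℓ, φ ℓ • x ℓ‖ ^ 2 := by
  classical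
  -- n is positive
  have hn : 0 < n := by
    by_contra h
    push_neg at h
    interval_cases n
    · simp at hφsum
  have i0 : Fin n := ⟨0, hn⟩
  haveI : Nonempty (Fin n) := ⟨i0⟩
  -- abbreviations
  set m : ℝ := ⨅ i, π i with hm_def
  set am : ℝ := minPosEntry A with ham_def
  set M : ℝ := ⨆ j, φ j with hM_def
  set DR : ℝ := (graphDiam E : ℝ) with hDR_def
  set KR : ℝ := (maxEdgeUtility E : ℝ) with hKR_def
  set y : EuclideanSpace ℝ (Fin p) := ∑ ℓ, φ ℓ • x ℓ with hy_def
  set S : ℝ := ∑ j, φ j * ‖x j - y‖ ^ 2 with hS_def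
  set Q : ℝ := ∑ i, π i * ∑ j, A i j * ‖x j - z i‖ ^ 2 with hQ_def
  -- basic positivity facts
  have hm_le : ∀ i, m ≤ π i := fun i =>
    ciInf_le (Set.Finite.bddBelow (Set.finite_range π)) i
  have hm0 : 0 ≤ m := le_ciInf hπnn
  have hM_le : ∀ j, φ j ≤ M := fun j =>
    le_ciSup (Set.Finite.bddAbove (Set.finite_range φ)) j
  have hM0 : 0 ≤ M := le_trans (hφnn i0) (hM_le i0)
  have hamS : am = sInf {v : ℝ | 0 < v ∧ ∃ i j, A i j = v} := rfl
  have ham0 : 0 ≤ am := by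
    rw [hamS]
    have hne : {v : ℝ | 0 < v ∧ ∃ i j, A i j = v}.Nonempty :=
      ⟨A i0 i0, (hAcompat i0 i0).2 (Or.inr rfl), i0, i0, rfl⟩
    exact le_csInf hne fun v hv => le_of_lt hv.1
  have ham_le : ∀ i j, 0 < A i j → am ≤ A i j := by
    intro i j h
    rw [hamS]
    exact csInf_le ⟨0, fun v hv => le_of_lt hv.1⟩ ⟨h, i, j, rfl⟩
  have hQ0 : 0 ≤ Q := by
    apply Finset.sum_nonneg
    intro i _
    exact mul_nonneg (hπnn i) (Finset.sum_nonneg fun j _ =>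
      mul_nonneg (hAnn i j) (sq_nonneg _))
  have hS0 : 0 ≤ S := Finset.sum_nonneg fun j _ => mul_nonneg (hφnn j) (sq_nonneg _)
  -- the key identity: ∑ π ‖z-u‖² = ∑ φ ‖x-u‖² - Q
  have hident : ∑ i, π i * ‖z i - u‖ ^ 2 = (∑ j, φ j * ‖x j - u‖ ^ 2) - Q := by
    have hrow : ∀ i, ‖z i - u‖ ^ 2
        = ∑ j, A i j * ‖x j - u‖ ^ 2 - ∑ j, A i j * ‖x j - z i‖ ^ 2 := by
      intro i
      have := var_ident (A i) (hArow i) x u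
      rw [← hz i] at this
      rw [this]; ring
    calc ∑ i, π i * ‖z i - u‖ ^ 2
        = ∑ i, (π i * ∑ j, A i j * ‖x j - u‖ ^ 2 - π i * ∑ j, A i j * ‖x j - z i‖ ^ 2) := by
          apply Finset.sum_congr rfl; intro i _; rw [hrow i]; ring
      _ = (∑ i, π i * ∑ j, A i j * ‖x j - u‖ ^ 2) - Q := by
          rw [Finset.sum_sub_distrib]
      _ = (∑ j, φ j * ‖x j - u‖ ^ 2) - Q := by
          congr 1
          calc ∑ i, π i * ∑ j, A i j * ‖x j - u‖ ^ 2
              = ∑ i, ∑ j, π i * A i j * ‖x j - u‖ ^ 2 := by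
                apply Finset.sum_congr rfl; intro i _
                rw [Finset.mul_sum]; apply Finset.sum_congr rfl; intro j _; ring
            _ = ∑ j, ∑ i, π i * A i j * ‖x j - u‖ ^ 2 := Finset.sum_comm
            _ = ∑ j, φ j * ‖x j - u‖ ^ 2 := by
                apply Finset.sum_congr rfl; intro j _
                rw [← Finset.sum_mul, hπA j]
  -- build the shortest-path covering
  have hP : ∀ j l : Fin n, ∃ w, IsWalkFromTo E w j l ∧ w.length = graphDist E j l + 1 ∧ w.Nodup :=
    fun j l => exists_shortest (hconn j l)
  set P : Fin n → Fin n → List (Fin n) := fun j l => (hP j l).choose with hP_def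
  have hPspec : ∀ j l, IsWalkFromTo E (P j l) j l ∧ (P j l).length = graphDist E j l + 1
      ∧ (P j l).Nodup := fun j l => (hP j l).choose_spec
  have hPcov : IsShortestPathCovering E P :=
    fun j l _ => ⟨(hPspec j l).1, (hPspec j l).2.1⟩
  -- main combinatorial inequality
  -- the function weighting edges
  have hmain : m * am ^ 2 * S ≤ M ^ 2 * DR * KR * Q := by
    set F : Fin n × Fin n → ℝ := fun q => ‖x q.1 - x q.2‖ ^ 2 with hF_def
    have hF0 : ∀ q, 0 ≤ F q := fun q => sq_nonneg _
    set T : ℝ := ∑ q ∈ Finset.univ.filter fun q : Fin n × Fin n => E q.1 q.2, F q with hT_def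
    -- Step 1 : 2 S = ∑_{(j,l)} φ_j φ_l ‖x_j - x_l‖²
    have h1 : 2 * S = ∑ q : Fin n × Fin n, φ q.1 * φ q.2 * F q := by
      rw [Fintype.sum_prod_type]
      have : ∀ j, ∑ l, φ j * φ l * F (j, l) = φ j * (S + ‖y - x j‖ ^ 2) := by
        intro j
        have hvi := var_ident φ hφsum x (x j)
        rw [← hy_def] at hvi
        have : ∑ l, φ j * φ l * F (j, l) = φ j * ∑ l, φ l * ‖x l - x j‖ ^ 2 := by
          rw [Finset.mul_sum]
          apply Finset.sum_congr rfl; intro l _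
          have : F (j, l) = ‖x l - x j‖ ^ 2 := by
            simp only [hF_def]
            rw [norm_sub_rev]
          rw [this]; ring
        rw [this, hvi, ← hS_def]
      rw [Finset.sum_congr rfl fun j _ => this j]
      have hexp : ∑ j, φ j * (S + ‖y - x j‖ ^ 2)
          = (∑ j, φ j) * S + ∑ j, φ j * ‖x j - y‖ ^ 2 := by
        rw [Finset.sum_mul, ← Finset.sum_add_distrib]
        apply Finset.sum_congr rfl; intro j _
        rw [norm_sub_rev y (x j)]; ring
      rw [hexp, hφsum]
      rw [show ∑ j, φ j * ‖x j - y‖ ^ 2 = S from (hS_def).symm]; ring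
    -- Step 2 : bound φ_j φ_l by M² (off-diagonal)
    have h2 : ∑ q : Fin n × Fin n, φ q.1 * φ q.2 * F q
        ≤ M ^ 2 * ∑ q : Fin n × Fin n, if q.1 ≠ q.2 then F q else 0 := by
      rw [Finset.mul_sum]
      apply Finset.sum_le_sum
      intro q _
      by_cases hq : q.1 = q.2
      · simp only [hq, if_neg (not_not.2 rfl)]
        have : F q = 0 := by simp only [hF_def, hq]; simp
        rw [this]; simp
      · rw [if_pos hq]
        have h1 : φ q.1 * φ q.2 ≤ M * M :=
          mul_le_mul (hM_le q.1) (hM_le q.2) (hφnn q.2) hM0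
        have := mul_le_mul_of_nonneg_right h1 (hF0 q)
        calc φ q.1 * φ q.2 * F q ≤ M * M * F q := this
          _ = M ^ 2 * F q := by ring
    -- Step 3 : per-pair path bound
    have h3 : ∑ q : Fin n × Fin n, (if q.1 ≠ q.2 then F q else 0)
        ≤ DR * ∑ q : Fin n × Fin n, (if q.1 ≠ q.2 then
            (∑ e : Fin n × Fin n, if (e.1, e.2) ∈ (P q.1 q.2).zip (P q.1 q.2).tail then F e else 0)
            else 0) := by
      rw [Finset.mul_sum]
      apply Finset.sum_le_sum
      intro q _
      by_cases hq : q.1 = q.2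
      · rw [if_neg (not_not.2 hq), if_neg (not_not.2 hq)]; simp
      · rw [if_pos hq, if_pos hq]
        obtain ⟨⟨hw1, hw2, hw3⟩, hwlen, hwnd⟩ := hPspec q.1 q.2
        set w := P q.1 q.2 with hw_def
        -- inner sum = list sum
        have hzipnd : (w.zip w.tail).Nodup := zip_tail_nodup hwnd
        have hlist : ∑ e : Fin n × Fin n,
            (if (e.1, e.2) ∈ w.zip w.tail then F e else 0)
            = ((w.zip w.tail).map F).sum := by
          rw [← List.sum_toFinset F hzipnd]
          rw [← Finset.sum_filter]
          apply Finset.sum_congr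
          · ext e
            simp [List.mem_toFinset]
          · intros; rfl
        rw [hlist]
        -- telescoping + Cauchy-Schwarz
        have htel := telescope x hw1 hw2
        have hcs := sq_norm_list_sum_le ((w.zip w.tail).map (fun e => x e.1 - x e.2))
        rw [htel, List.length_map, List.map_map] at hcs
        have hmapeq : ((fun v => ‖v‖ ^ 2) ∘ fun e : Fin n × Fin n => x e.1 - x e.2) = F := by
          funext e; rfl
        rw [hmapeq] at hcs
        have hziplen : (w.zip w.tail).length = graphDist E q.1 q.2 := by
          rw [List.length_zip, List.length_tail, hwlen]
          simp
        rw [hziplen] at hcs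
        have hdistD : (graphDist E q.1 q.2 : ℝ) ≤ DR := by
          rw [hDR_def]
          have hbdd : BddAbove {d | ∃ j l : Fin n, j ≠ l ∧ graphDist E j l = d} := by
            apply Set.Finite.bddAbove
            apply Set.Finite.subset (Set.finite_range fun q : Fin n × Fin n => graphDist E q.1 q.2)
            rintro d ⟨j, l, _, rfl⟩
            exact ⟨(j, l), rfl⟩
          have := le_csSup hbdd (show graphDist E q.1 q.2 ∈ _ from ⟨q.1, q.2, hq, rfl⟩)
          exact_mod_cast this
        have hsum0 : 0 ≤ ((w.zip w.tail).map F).sum := by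
          apply List.sum_nonneg
          intro a ha
          obtain ⟨e, _, rfl⟩ := List.mem_map.1 ha
          exact hF0 e
        calc F q ≤ (graphDist E q.1 q.2 : ℝ) * ((w.zip w.tail).map F).sum := hcs
          _ ≤ DR * ((w.zip w.tail).map F).sum :=
            mul_le_mul_of_nonneg_right hdistD hsum0
    -- Step 4 : swap and count utilities
    have h4 : ∑ q : Fin n × Fin n, (if q.1 ≠ q.2 then
            (∑ e : Fin n × Fin n, if (e.1, e.2) ∈ (P q.1 q.2).zip (P q.1 q.2).tail then F e else 0)
            else 0)
        = ∑ e : Fin n × Fin n, (edgeUtility P e.1 e.2 : ℝ) * F e := by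
      calc ∑ q : Fin n × Fin n, (if q.1 ≠ q.2 then
            (∑ e : Fin n × Fin n, if (e.1, e.2) ∈ (P q.1 q.2).zip (P q.1 q.2).tail then F e else 0)
            else 0)
          = ∑ q : Fin n × Fin n, ∑ e : Fin n × Fin n,
              (if (q.1 ≠ q.2 ∧ edgeInWalk e.1 e.2 (P q.1 q.2)) then F e else 0) := by
            apply Finset.sum_congr rfl
            intro q _
            by_cases h1 : q.1 ≠ q.2
            · rw [if_pos h1]
              apply Finset.sum_congr rfl
              intro e _
              by_cases h2 : (e.1, e.2) ∈ (P q.1 q.2).zip (P q.1 q.2).tail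
              · rw [if_pos h2, if_pos (⟨h1, h2⟩ : q.1 ≠ q.2 ∧ edgeInWalk e.1 e.2 (P q.1 q.2))]
              · rw [if_neg h2, if_neg (fun h => h2 h.2)]
            · rw [if_neg h1]
              symm
              apply Finset.sum_eq_zero
              intro e _
              rw [if_neg (fun h => h1 h.1)]
        _ = ∑ e : Fin n × Fin n, ∑ q : Fin n × Fin n,
              (if (q.1 ≠ q.2 ∧ edgeInWalk e.1 e.2 (P q.1 q.2)) then F e else 0) := Finset.sum_comm
        _ = ∑ e : Fin n × Fin n, (edgeUtility P e.1 e.2 : ℝ) * F e := by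
            apply Finset.sum_congr rfl
            intro e _
            rw [← Finset.sum_filter, Finset.sum_const, nsmul_eq_mul]
            rfl
    -- Step 5 : utilities bounded by KR on edges, zero off edges
    have h5 : ∑ e : Fin n × Fin n, (edgeUtility P e.1 e.2 : ℝ) * F e ≤ KR * T := by
      have hKbdd : BddAbove {u | ∃ P' : Fin n → Fin n → List (Fin n),
          IsShortestPathCovering E P' ∧ coveringMaxUtility E P' = u} := by
        refine ⟨Fintype.card (Fin n × Fin n), ?_⟩
        rintro u ⟨P', _, rfl⟩
        apply Finset.sup_le
        intro q _
        exact le_trans (Finset.card_filter_le _ _) (le_of_eq (Finset.card_univ))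
      have hKP : (coveringMaxUtility E P : ℝ) ≤ KR := by
        rw [hKR_def]
        exact_mod_cast le_csSup hKbdd ⟨P, hPcov, rfl⟩
      have hzero : ∀ e : Fin n × Fin n, ¬ E e.1 e.2 → edgeUtility P e.1 e.2 = 0 := by
        intro e he
        rw [edgeUtility, Finset.card_eq_zero, Finset.filter_eq_empty_iff]
        rintro q _
        rintro ⟨hne, hedge⟩
        exact he (edge_of_mem_zip (hPspec q.1 q.2).1.2.2 hedge)
      calc ∑ e : Fin n × Fin n, (edgeUtility P e.1 e.2 : ℝ) * F e
          = ∑ e ∈ Finset.univ.filter (fun e : Fin n × Fin n => E e.1 e.2),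
              (edgeUtility P e.1 e.2 : ℝ) * F e := by
            symm
            apply Finset.sum_subset (Finset.filter_subset _ _)
            intro e _ he
            rw [Finset.mem_filter] at he
            push_neg at he
            rw [hzero e (he (Finset.mem_univ e))]
            simp
        _ ≤ ∑ e ∈ Finset.univ.filter (fun e : Fin n × Fin n => E e.1 e.2), KR * F e := by
            apply Finset.sum_le_sum
            intro e hee
            rw [Finset.mem_filter] at hee
            apply mul_le_mul_of_nonneg_right _ (hF0 e)
            refine le_trans ?_ hKP
            have hmem : e ∈ Finset.univ.filter fun q : Fin n × Fin n => E q.1 q.2 :=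
              Finset.mem_filter.2 ⟨Finset.mem_univ e, hee.2⟩
            have := Finset.le_sup (s := Finset.univ.filter fun q : Fin n × Fin n => E q.1 q.2)
              (f := fun q : Fin n × Fin n => edgeUtility P q.1 q.2) hmem
            exact_mod_cast this
        _ = KR * T := by rw [hT_def, Finset.mul_sum]
    -- Step 6 : per-node bound: m am² T ≤ 2 Q
    have h6 : m * am ^ 2 * T ≤ 2 * Q := by
      -- rewrite T as a double sum grouped by edge targets
      have hTsplit : T = ∑ b, ∑ a, (if E a b then F (a, b) else 0) := by
        calc T = ∑ q : Fin n × Fin n, (if E q.1 q.2 then F q else 0) := by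
              rw [hT_def]; exact Finset.sum_filter _ _
          _ = ∑ a, ∑ b, (if E a b then F (a, b) else 0) := Fintype.sum_prod_type _
          _ = ∑ b, ∑ a, (if E a b then F (a, b) else 0) := Finset.sum_comm
      have hperb : ∀ b, m * am ^ 2 * ∑ a, (if E a b then F (a, b) else 0)
          ≤ 2 * (π b * ∑ j, A b j * ‖x j - z b‖ ^ 2) := by
        intro b
        set In' : Finset (Fin n) := Finset.univ.filter fun a => E a b ∧ a ≠ b with hIn_def
        set r : ℕ := In'.card with hr_def
        have hbnotin : b ∉ In' := by simp [hIn_def]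
        -- row bound : am * (r+1) ≤ 1
        have hrow1 : am * (r + 1 : ℝ) ≤ 1 := by
          have hsub : insert b In' ⊆ Finset.univ := Finset.subset_univ _
          have hsum_le : ∑ a ∈ insert b In', A b a ≤ ∑ a, A b a :=
            Finset.sum_le_sum_of_subset_of_nonneg hsub fun a _ _ => hAnn b a
          have hlow : am * (r + 1 : ℝ) ≤ ∑ a ∈ insert b In', A b a := by
            have hcard : (insert b In').card = r + 1 := by
              rw [Finset.card_insert_of_notMem hbnotin, hr_def]
            have : ∀ a ∈ insert b In', am ≤ A b a := by
              intro a ha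
              rcases Finset.mem_insert.1 ha with h | ha'
              · rw [h]; exact ham_le b b ((hAcompat b b).2 (Or.inr rfl))
              · rw [hIn_def, Finset.mem_filter] at ha'
                exact ham_le b a ((hAcompat b a).2 (Or.inl ha'.2.1))
            calc am * (r + 1 : ℝ) = (insert b In').card * am := by
                  rw [hcard]; push_cast; ring
              _ = ∑ _a ∈ insert b In', am := by rw [Finset.sum_const, nsmul_eq_mul]
              _ ≤ ∑ a ∈ insert b In', A b a := Finset.sum_le_sum this
          calc am * (r + 1 : ℝ) ≤ ∑ a ∈ insert b In', A b a := hlow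
            _ ≤ ∑ a, A b a := hsum_le
            _ = 1 := hArow b
        have ham1 : am ≤ 1 := by nlinarith [ham0, Nat.cast_nonneg (α := ℝ) r]
        have hamr : am * r ≤ 1 := by nlinarith [ham0]
        -- the sum over edges into b is a sum over In'
        have hedge_sum : ∑ a, (if E a b then F (a, b) else 0) ≤ ∑ a ∈ In', F (a, b) := by
          rw [← Finset.sum_filter]
          have hsub : Finset.univ.filter (fun a => E a b) ⊆ insert b In' := by
            intro a ha
            rw [Finset.mem_filter] at ha
            by_cases hab : a = b
            · exact Finset.mem_insert.2 (Or.inl hab)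
            · refine Finset.mem_insert.2 (Or.inr ?_)
              rw [hIn_def]
              exact Finset.mem_filter.2 ⟨Finset.mem_univ a, ha.2, hab⟩
          calc ∑ a ∈ Finset.univ.filter (fun a => E a b), F (a, b)
              ≤ ∑ a ∈ insert b In', F (a, b) :=
                Finset.sum_le_sum_of_subset_of_nonneg hsub fun a _ _ => hF0 (a, b)
            _ = F (b, b) + ∑ a ∈ In', F (a, b) := Finset.sum_insert hbnotin
            _ = ∑ a ∈ In', F (a, b) := by
                have : F (b, b) = 0 := by simp [hF_def]
                rw [this, zero_add]
        -- triangle bound per incoming edge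
        have htri : ∀ a, F (a, b) ≤ 2 * ‖x a - z b‖ ^ 2 + 2 * ‖x b - z b‖ ^ 2 := by
          intro a
          have h1 : ‖x a - x b‖ ≤ ‖x a - z b‖ + ‖x b - z b‖ := by
            calc ‖x a - x b‖ = ‖(x a - z b) - (x b - z b)‖ := by congr 1; abel
              _ ≤ ‖x a - z b‖ + ‖x b - z b‖ := norm_sub_le _ _
          have h2 : ‖x a - x b‖ ^ 2 ≤ (‖x a - z b‖ + ‖x b - z b‖) ^ 2 :=
            pow_le_pow_left₀ (norm_nonneg _) h1 2
          simp only [hF_def]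
          nlinarith [sq_nonneg (‖x a - z b‖ - ‖x b - z b‖)]
        -- chain of inequalities
        have hstep1 : am ^ 2 * ∑ a ∈ In', F (a, b)
            ≤ 2 * (am * ∑ a ∈ In', ‖x a - z b‖ ^ 2 + am * ‖x b - z b‖ ^ 2) := by
          have hsum_tri : ∑ a ∈ In', F (a, b)
              ≤ 2 * ∑ a ∈ In', ‖x a - z b‖ ^ 2 + 2 * (r : ℝ) * ‖x b - z b‖ ^ 2 := by
            calc ∑ a ∈ In', F (a, b)
                ≤ ∑ a ∈ In', (2 * ‖x a - z b‖ ^ 2 + 2 * ‖x b - z b‖ ^ 2) :=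
                  Finset.sum_le_sum fun a _ => htri a
              _ = 2 * ∑ a ∈ In', ‖x a - z b‖ ^ 2 + 2 * (r : ℝ) * ‖x b - z b‖ ^ 2 := by
                  rw [Finset.sum_add_distrib, ← Finset.mul_sum, Finset.sum_const, nsmul_eq_mul,
                    hr_def]
                  ring
          have hs0 : 0 ≤ ∑ a ∈ In', ‖x a - z b‖ ^ 2 :=
            Finset.sum_nonneg fun a _ => sq_nonneg _
          have e1 : am ^ 2 * ∑ a ∈ In', F (a, b)
              ≤ am ^ 2 * (2 * ∑ a ∈ In', ‖x a - z b‖ ^ 2 + 2 * (r : ℝ) * ‖x b - z b‖ ^ 2) :=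
            mul_le_mul_of_nonneg_left hsum_tri (sq_nonneg am)
          have e2 : am ^ 2 * (2 * ∑ a ∈ In', ‖x a - z b‖ ^ 2)
              ≤ am * (2 * ∑ a ∈ In', ‖x a - z b‖ ^ 2) := by
            apply mul_le_mul_of_nonneg_right _ (by positivity)
            nlinarith [ham0, ham1]
          have e3 : am ^ 2 * (2 * (r : ℝ) * ‖x b - z b‖ ^ 2)
              ≤ am * (2 * ‖x b - z b‖ ^ 2) := by
            have : am ^ 2 * (2 * (r : ℝ)) ≤ am * 2 := by nlinarith [ham0, hamr]
            calc am ^ 2 * (2 * (r : ℝ) * ‖x b - z b‖ ^ 2)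
                = (am ^ 2 * (2 * (r : ℝ))) * ‖x b - z b‖ ^ 2 := by ring
              _ ≤ (am * 2) * ‖x b - z b‖ ^ 2 :=
                mul_le_mul_of_nonneg_right this (sq_nonneg _)
              _ = am * (2 * ‖x b - z b‖ ^ 2) := by ring
          nlinarith [e1, e2, e3]
        have hstep2 : am * ∑ a ∈ In', ‖x a - z b‖ ^ 2 + am * ‖x b - z b‖ ^ 2
            ≤ ∑ j, A b j * ‖x j - z b‖ ^ 2 := by
          have hins : ∑ a ∈ insert b In', A b a * ‖x a - z b‖ ^ 2
              ≤ ∑ j, A b j * ‖x j - z b‖ ^ 2 :=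
            Finset.sum_le_sum_of_subset_of_nonneg (Finset.subset_univ _)
              fun j _ _ => mul_nonneg (hAnn b j) (sq_nonneg _)
          have hterm : am * ∑ a ∈ In', ‖x a - z b‖ ^ 2 + am * ‖x b - z b‖ ^ 2
              ≤ ∑ a ∈ insert b In', A b a * ‖x a - z b‖ ^ 2 := by
            rw [Finset.sum_insert hbnotin]
            have hd : am * ‖x b - z b‖ ^ 2 ≤ A b b * ‖x b - z b‖ ^ 2 :=
              mul_le_mul_of_nonneg_right (ham_le b b ((hAcompat b b).2 (Or.inr rfl)))
                (sq_nonneg _)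
            have ho : am * ∑ a ∈ In', ‖x a - z b‖ ^ 2
                ≤ ∑ a ∈ In', A b a * ‖x a - z b‖ ^ 2 := by
              rw [Finset.mul_sum]
              apply Finset.sum_le_sum
              intro a ha
              rw [hIn_def, Finset.mem_filter] at ha
              exact mul_le_mul_of_nonneg_right
                (ham_le b a ((hAcompat b a).2 (Or.inl ha.2.1))) (sq_nonneg _)
            linarith
          linarith
        -- multiply by m ≤ π b
        have hmπ : m * ∑ j, A b j * ‖x j - z b‖ ^ 2 ≤ π b * ∑ j, A b j * ‖x j - z b‖ ^ 2 :=
          mul_le_mul_of_nonneg_right (hm_le b)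
            (Finset.sum_nonneg fun j _ => mul_nonneg (hAnn b j) (sq_nonneg _))
        have hedge' : m * am ^ 2 * ∑ a, (if E a b then F (a, b) else 0)
            ≤ m * am ^ 2 * ∑ a ∈ In', F (a, b) :=
          mul_le_mul_of_nonneg_left hedge_sum (mul_nonneg hm0 (sq_nonneg am))
        have hcomb : m * (am ^ 2 * ∑ a ∈ In', F (a, b))
            ≤ m * (2 * (am * ∑ a ∈ In', ‖x a - z b‖ ^ 2 + am * ‖x b - z b‖ ^ 2)) :=
          mul_le_mul_of_nonneg_left hstep1 hm0
        have hcomb2 : m * (am * ∑ a ∈ In', ‖x a - z b‖ ^ 2 + am * ‖x b - z b‖ ^ 2)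
            ≤ m * ∑ j, A b j * ‖x j - z b‖ ^ 2 :=
          mul_le_mul_of_nonneg_left hstep2 hm0
        nlinarith [hedge', hcomb, hcomb2, hmπ]
      calc m * am ^ 2 * T = ∑ b, m * am ^ 2 * ∑ a, (if E a b then F (a, b) else 0) := by
            rw [hTsplit, Finset.mul_sum]
        _ ≤ ∑ b, 2 * (π b * ∑ j, A b j * ‖x j - z b‖ ^ 2) :=
            Finset.sum_le_sum fun b _ => hperb b
        _ = 2 * Q := by rw [hQ_def, Finset.mul_sum]
    -- combine
    have hMM : (0 : ℝ) ≤ M ^ 2 := sq_nonneg M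
    have hDR0 : (0 : ℝ) ≤ DR := Nat.cast_nonneg _
    have hKR0 : (0 : ℝ) ≤ KR := Nat.cast_nonneg _
    have hT0 : 0 ≤ T := Finset.sum_nonneg fun e _ => hF0 e
    have hma0 : 0 ≤ m * am ^ 2 := mul_nonneg hm0 (sq_nonneg am)
    have hchain : 2 * S ≤ M ^ 2 * (DR * (KR * T)) := by
      calc 2 * S = ∑ q : Fin n × Fin n, φ q.1 * φ q.2 * F q := h1
        _ ≤ M ^ 2 * ∑ q : Fin n × Fin n, if q.1 ≠ q.2 then F q else 0 := h2
        _ ≤ M ^ 2 * (DR * ∑ q : Fin n × Fin n, (if q.1 ≠ q.2 then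
            (∑ e : Fin n × Fin n, if (e.1, e.2) ∈ (P q.1 q.2).zip (P q.1 q.2).tail then F e else 0)
            else 0)) := mul_le_mul_of_nonneg_left h3 hMM
        _ = M ^ 2 * (DR * ∑ e : Fin n × Fin n, (edgeUtility P e.1 e.2 : ℝ) * F e) := by rw [h4]
        _ ≤ M ^ 2 * (DR * (KR * T)) :=
            mul_le_mul_of_nonneg_left (mul_le_mul_of_nonneg_left h5 hDR0) hMM
    have hA' : m * am ^ 2 * (2 * S) ≤ m * am ^ 2 * (M ^ 2 * (DR * (KR * T))) :=
      mul_le_mul_of_nonneg_left hchain hma0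
    have hB' : M ^ 2 * DR * KR * (m * am ^ 2 * T) ≤ M ^ 2 * DR * KR * (2 * Q) :=
      mul_le_mul_of_nonneg_left h6 (mul_nonneg (mul_nonneg hMM hDR0) hKR0)
    nlinarith [hA', hB']
  -- conclude
  rw [hident]
  have hfinal : ((m * am ^ 2) / (M ^ 2 * DR * KR)) * S ≤ Q := by
    have hβ0 : 0 ≤ M ^ 2 * DR * KR :=
      mul_nonneg (mul_nonneg (sq_nonneg M) (Nat.cast_nonneg _)) (Nat.cast_nonneg _)
    rcases eq_or_lt_of_le hβ0 with hβ | hβ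
    · rw [← hβ, div_zero, zero_mul]; exact hQ0
    · rw [div_mul_eq_mul_div, div_le_iff₀ hβ]
      calc m * am ^ 2 * S ≤ M ^ 2 * DR * KR * Q := hmain
        _ = Q * (M ^ 2 * DR * KR) := by ring
  linarith [hfinal]
end

section
/- Let B be a column-stochastic matrix compatible with a strongly connected directed graph G (positive diagonal, B_{ij} > 0 iff (j,i) ∈ E or j = i), ν a stochastic vector with positive entries, and π = Bν. For vectors y_1,...,y_n ∈ R^p, define w_i = Σ_j B_{ij} y_j. Then sqrt(Σ_i π_i ‖w_i/π_i − Σ_ℓ y_ℓ‖²) ≤ τ · sqrt(Σ_i ν_i ‖y_i/ν_i − Σ_ℓ y_ℓ‖²), where τ = sqrt(1 − min(ν)²(min(B⁺))² / (max(ν)² max(π) D(G) K(G))) ∈ (0,1). -/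
open scoped Classical

section Walks
variable {n : ℕ} {E : Fin n → Fin n → Prop}

lemma walk_ne_nil {w : List (Fin n)} {j l : Fin n} (h : IsWalkFromTo E w j l) : w ≠ [] := by
  intro hw
  rw [hw] at h
  simp [IsWalkFromTo] at h

lemma shorten_walk {w : List (Fin n)} {j l : Fin n} (h : IsWalkFromTo E w j l)
    (hnd : ¬ w.Nodup) : ∃ w', IsWalkFromTo E w' j l ∧ w'.length < w.length := by
  obtain ⟨hh, hl, hc⟩ := h
  rw [List.nodup_iff_getElem?_ne_getElem?] at hnd
  push_neg at hnd
  obtain ⟨i, k, hik, hk, heq⟩ := hnd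
  have hwne : w ≠ [] := by intro h0; rw [h0] at hk; simp at hk
  have htake_len : (w.take (i+1)).length = i + 1 := by
    rw [List.length_take]; omega
  have htake_ne : w.take (i+1) ≠ [] := by
    intro h0; rw [h0] at htake_len; simp at htake_len
  have hgetlast_take : (w.take (i+1)).getLast? = w[i]? := by
    rw [List.getLast?_eq_getElem?, htake_len, Nat.add_sub_cancel, List.getElem?_take,
      if_pos (Nat.lt_succ_self i)]
  refine ⟨w.take (i+1) ++ w.drop (k+1), ⟨?_, ?_, ?_⟩, ?_⟩
  · rw [List.head?_append_of_ne_nil _ htake_ne, List.head?_eq_getElem?, List.getElem?_take,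
      if_pos (by omega), ← List.head?_eq_getElem?]
    exact hh
  · by_cases hk1 : k + 1 < w.length
    · have hdrop_ne : w.drop (k+1) ≠ [] := by
        intro h0
        have : (w.drop (k+1)).length = w.length - (k+1) := List.length_drop
        rw [h0] at this; simp at this; omega
      rw [List.getLast?_append_of_ne_nil _ hdrop_ne, List.getLast?_eq_getElem?,
        List.length_drop, List.getElem?_drop]
      rw [List.getLast?_eq_getElem?] at hl
      convert hl using 2
      omega
    · have hdrop : w.drop (k+1) = [] := by
        apply List.drop_eq_nil_of_le; omega
      rw [hdrop, List.append_nil, hgetlast_take, heq]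
      rw [List.getLast?_eq_getElem?] at hl
      convert hl using 2
      omega
  · rw [show List.Chain' E (w.take (i+1) ++ w.drop (k+1)) ↔ _ from List.isChain_append]
    refine ⟨List.IsChain.take hc _, List.IsChain.drop hc _, ?_⟩
    intro x hx y hy
    by_cases hk1 : k + 1 < w.length
    · rw [hgetlast_take, heq, List.getElem?_eq_getElem (by omega : k < w.length)] at hx
      rw [List.head?_eq_getElem?, List.getElem?_drop, Nat.add_zero,
        List.getElem?_eq_getElem hk1] at hy
      simp only [Option.mem_def, Option.some_inj] at hx hy
      subst hx; subst hy
      have := List.isChain_iff_getElem.1 hc k (by omega)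
      simpa using this
    · have hdrop : w.drop (k+1) = [] := by apply List.drop_eq_nil_of_le; omega
      rw [hdrop] at hy
      simp at hy
  · rw [List.length_append, htake_len, List.length_drop]
    omega

lemma exists_min_walk (hconn : ∀ j l : Fin n, ∃ w, IsWalkFromTo E w j l) (j l : Fin n) :
    ∃ w, IsWalkFromTo E w j l ∧
      w.length = sInf {m | ∃ w : List (Fin n), IsWalkFromTo E w j l ∧ w.length = m + 1} + 1 := by
  obtain ⟨w, hw⟩ := hconn j l
  have hne : w ≠ [] := walk_ne_nil hw
  have hmem : w.length - 1 ∈ {m | ∃ w' : List (Fin n), IsWalkFromTo E w' j l ∧ w'.length = m + 1} :=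
    ⟨w, hw, by have := List.length_pos_iff.2 hne; omega⟩
  obtain ⟨w', hw', hlen⟩ := Nat.sInf_mem (Set.nonempty_of_mem hmem)
  exact ⟨w', hw', hlen⟩

end Walks


section W2
variable {n : ℕ} {E : Fin n → Fin n → Prop}

lemma walk_ne_nil' {w : List (Fin n)} {j l : Fin n} (h : IsWalkFromTo E w j l) : w ≠ [] := by
  intro hw; rw [hw] at h; simp [IsWalkFromTo] at h

lemma walk_telescope {V : Type*} [AddCommGroup V] (u : Fin n → V) :
    ∀ (w : List (Fin n)) (j l : Fin n), w.head? = some j → w.getLast? = some l →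
      ((w.zip w.tail).map fun e => u e.1 - u e.2).sum = u j - u l := by
  intro w
  induction w with
  | nil => intro j l hj _; simp at hj
  | cons a t ih =>
    intro j l hj hl
    simp only [List.head?_cons, Option.some_inj] at hj
    subst hj
    cases t with
    | nil =>
      simp only [List.getLast?_singleton, Option.some_inj] at hl
      subst hl
      simp
    | cons b t' =>
      have hl' : (b :: t').getLast? = some l := by rwa [List.getLast?_cons_cons] at hl
      have hrec := ih b l rfl hl'
      simp only [List.tail_cons] at hrec
      simp only [List.tail_cons, List.zip_cons_cons, List.map_cons, List.sum_cons]
      rw [hrec]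
      abel

lemma mem_zip_of_chain {w : List (Fin n)} (hc : w.Chain' E) {e : Fin n × Fin n}
    (he : e ∈ w.zip w.tail) : E e.1 e.2 := by
  induction w with
  | nil => simp at he
  | cons a t ih =>
    cases t with
    | nil => simp at he
    | cons b t' =>
      rw [show List.Chain' E (a :: b :: t') ↔ E a b ∧ List.Chain' E (b :: t') from List.isChain_cons_cons] at hc
      simp only [List.tail_cons, List.zip_cons_cons, List.mem_cons] at he
      rcases he with rfl | he
      · exact hc.1
      · exact ih hc.2 he

lemma mem_zip_ne {w : List (Fin n)} (hnd : w.Nodup) {e : Fin n × Fin n}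
    (he : e ∈ w.zip w.tail) : e.1 ≠ e.2 := by
  induction w with
  | nil => simp at he
  | cons a t ih =>
    cases t with
    | nil => simp at he
    | cons b t' =>
      simp only [List.tail_cons, List.zip_cons_cons, List.mem_cons] at he
      rcases he with rfl | he
      · show a ≠ b
        intro h
        rw [List.nodup_cons] at hnd
        exact hnd.1 (h ▸ List.mem_cons_self (a := b) (l := t'))
      · exact ih hnd.of_cons he

lemma zip_nodup {w : List (Fin n)} (hnd : w.Nodup) : (w.zip w.tail).Nodup := by
  induction w with
  | nil => simp
  | cons a t ih =>
    cases t with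
    | nil => simp
    | cons b t' =>
      simp only [List.tail_cons, List.zip_cons_cons]
      refine List.Nodup.cons ?_ (ih hnd.of_cons)
      intro hmem
      have h1 : a ∈ b :: t' := (List.of_mem_zip hmem).1
      rw [List.nodup_cons] at hnd
      exact hnd.1 h1

lemma zip_length {w : List (Fin n)} : (w.zip w.tail).length = w.length - 1 := by
  rw [List.length_zip, List.length_tail]
  omega

lemma walk_exists_edge :
    ∀ (w : List (Fin n)) (j l : Fin n), j ≠ l → IsWalkFromTo E w j l →
      ∃ a b : Fin n, a ≠ b ∧ E a b := by
  intro w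
  induction w with
  | nil => intro j l _ h; exact absurd rfl (walk_ne_nil' h)
  | cons a t ih =>
    intro j l hjl h
    obtain ⟨hh, hl, hc⟩ := h
    simp only [List.head?_cons, Option.some_inj] at hh
    subst hh
    cases t with
    | nil =>
      simp only [List.getLast?_singleton, Option.some_inj] at hl
      exact absurd hl hjl
    | cons b t' =>
      rw [show List.Chain' E (a :: b :: t') ↔ E a b ∧ List.Chain' E (b :: t') from List.isChain_cons_cons] at hc
      by_cases hab : a = b
      · subst hab
        refine ih a l hjl ⟨rfl, ?_, hc.2⟩
        rwa [List.getLast?_cons_cons] at hl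
      · exact ⟨a, b, hab, hc.1⟩

lemma one_le_graphDist (hconn : ∀ j l : Fin n, ∃ w, IsWalkFromTo E w j l)
    {j l : Fin n} (hjl : j ≠ l) : 1 ≤ graphDist E j l := by
  obtain ⟨w, hw⟩ := hconn j l
  have hne : w ≠ [] := walk_ne_nil' hw
  have hmem : w.length - 1 ∈ {m | ∃ w' : List (Fin n), IsWalkFromTo E w' j l ∧ w'.length = m + 1} :=
    ⟨w, hw, by have := List.length_pos_iff.2 hne; omega⟩
  obtain ⟨w', hw', hlen⟩ := Nat.sInf_mem (Set.nonempty_of_mem hmem)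
  rcases Nat.eq_zero_or_pos (graphDist E j l) with h0 | h1
  · exfalso
    rw [graphDist] at *
    rw [h0] at hlen
    obtain ⟨hh, hl, -⟩ := hw'
    rcases w' with _ | ⟨x, t⟩
    · simp at hh
    · simp at hlen
      rw [hlen] at hl hh
      simp at hl hh
      exact hjl (hh.symm.trans hl)
  · exact h1

end W2


section Analytic

lemma list_sum_sq_norm_le {V : Type*} [SeminormedAddCommGroup V] :
    ∀ L : List V, ‖L.sum‖ ^ 2 ≤ (L.length : ℝ) * (L.map fun v => ‖v‖ ^ 2).sum := by
  intro L
  induction L with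
  | nil => simp
  | cons a t ih =>
    simp only [List.sum_cons, List.length_cons, List.map_cons, Nat.cast_add, Nat.cast_one]
    have hT : (0:ℝ) ≤ (t.map fun v => ‖v‖ ^ 2).sum := by
      apply List.sum_nonneg
      intro x hx
      obtain ⟨v, -, rfl⟩ := List.mem_map.1 hx
      positivity
    have h1 : ‖a + t.sum‖ ≤ ‖a‖ + ‖t.sum‖ := norm_add_le _ _
    have h2 : ‖a + t.sum‖ ^ 2 ≤ (‖a‖ + ‖t.sum‖) ^ 2 := by
      apply pow_le_pow_left₀ (norm_nonneg _) h1
    refine h2.trans ?_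
    rcases t.eq_nil_or_concat with rfl | hne
    · simp
    have hk : (1:ℝ) ≤ (t.length : ℝ) := by
      have h1 : 1 ≤ t.length := by
        obtain ⟨l', b, rfl⟩ := hne
        simp
      exact_mod_cast h1
    set x := ‖a‖ with hx
    set z := ‖t.sum‖ with hz
    set k := (t.length : ℝ) with hkk
    set T := (t.map fun v => ‖v‖ ^ 2).sum with hTT
    have hIH : z ^ 2 ≤ k * T := ih
    have hxnn : 0 ≤ x := norm_nonneg _
    have hznn : 0 ≤ z := norm_nonneg _
    nlinarith [sq_nonneg (k * x - z), sq_nonneg (x - z), mul_nonneg hxnn hznn]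

lemma jensen_deficit {V : Type*} [NormedAddCommGroup V] [InnerProductSpace ℝ V] {m : ℕ}
    (q : Fin m → ℝ) (u : Fin m → V) (hq1 : ∑ j, q j = 1) :
    ‖∑ j, q j • u j‖ ^ 2 =
      ∑ j, q j * ‖u j‖ ^ 2 - (1/2) * ∑ j, ∑ l, q j * q l * ‖u j - u l‖ ^ 2 := by
  have key : ∑ j, ∑ l, q j * q l * (inner ℝ (u j) (u l) : ℝ) = ‖∑ j, q j • u j‖ ^ 2 := by
    rw [← real_inner_self_eq_norm_sq, sum_inner]
    refine Finset.sum_congr rfl fun j _ => ?_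
    rw [real_inner_smul_left, inner_sum, Finset.mul_sum]
    refine Finset.sum_congr rfl fun l _ => ?_
    rw [real_inner_smul_right]
    ring
  have expand : ∑ j, ∑ l, q j * q l * ‖u j - u l‖ ^ 2 =
      (∑ j, q j * ‖u j‖ ^ 2) + (∑ l, q l * ‖u l‖ ^ 2)
        - 2 * ∑ j, ∑ l, q j * q l * (inner ℝ (u j) (u l) : ℝ) := by
    have hterm : ∀ j l : Fin m, q j * q l * ‖u j - u l‖ ^ 2 =
        q j * q l * ‖u j‖ ^ 2 + q j * q l * ‖u l‖ ^ 2
          - 2 * (q j * q l * (inner ℝ (u j) (u l) : ℝ)) := by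
      intro j l
      rw [@norm_sub_sq_real V]
      ring
    have e1 : ∑ j, ∑ l, q j * q l * ‖u j‖ ^ 2 = ∑ j, q j * ‖u j‖ ^ 2 := by
      refine Finset.sum_congr rfl fun j _ => ?_
      calc ∑ l, q j * q l * ‖u j‖ ^ 2 = (q j * ‖u j‖ ^ 2) * ∑ l, q l := by
            rw [Finset.mul_sum]
            exact Finset.sum_congr rfl fun l _ => by ring
        _ = q j * ‖u j‖ ^ 2 := by rw [hq1, mul_one]
    have e2 : ∑ j, ∑ l, q j * q l * ‖u l‖ ^ 2 = ∑ l, q l * ‖u l‖ ^ 2 := by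
      rw [Finset.sum_comm]
      refine Finset.sum_congr rfl fun l _ => ?_
      calc ∑ j, q j * q l * ‖u l‖ ^ 2 = (q l * ‖u l‖ ^ 2) * ∑ j, q j := by
            rw [Finset.mul_sum]
            exact Finset.sum_congr rfl fun j _ => by ring
        _ = q l * ‖u l‖ ^ 2 := by rw [hq1, mul_one]
    simp_rw [hterm, Finset.sum_sub_distrib, Finset.sum_add_distrib, ← Finset.mul_sum]
    rw [e1, e2]
  rw [expand, key]
  ring
end Analytic
section EdgeMem
variable {n : ℕ} {E : Fin n → Fin n → Prop}

lemma walk_exists_edge_mem :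
    ∀ (w : List (Fin n)) (j l : Fin n), j ≠ l → IsWalkFromTo E w j l →
      ∃ a b : Fin n, a ≠ b ∧ (a, b) ∈ w.zip w.tail := by
  intro w
  induction w with
  | nil => intro j l _ h; exact absurd rfl (walk_ne_nil' h)
  | cons a t ih =>
    intro j l hjl h
    obtain ⟨hh, hl, hc⟩ := h
    simp only [List.head?_cons, Option.some_inj] at hh
    subst hh
    cases t with
    | nil =>
      simp only [List.getLast?_singleton, Option.some_inj] at hl
      exact absurd hl hjl
    | cons b t' =>
      rw [show List.Chain' E (a :: b :: t') ↔ E a b ∧ List.Chain' E (b :: t') from List.isChain_cons_cons] at hc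
      by_cases hab : a = b
      · subst hab
        obtain ⟨α, β, h1, h2⟩ := ih a l hjl ⟨rfl, by rwa [List.getLast?_cons_cons] at hl, hc.2⟩
        refine ⟨α, β, h1, ?_⟩
        simp only [List.tail_cons, List.zip_cons_cons]
        simp only [List.tail_cons] at h2
        exact List.mem_cons_of_mem _ h2
      · refine ⟨a, b, hab, ?_⟩
        simp [List.zip_cons_cons]

end EdgeMem

section Covering
variable {n : ℕ} {E : Fin n → Fin n → Prop}

lemma exists_good_covering (hconn : StronglyConnectedDigraph E) :
    ∃ P : Fin n → Fin n → List (Fin n), IsShortestPathCovering E P ∧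
      ∀ j l : Fin n, (P j l).Nodup := by
  have h : ∀ j l : Fin n, ∃ w : List (Fin n),
      (IsWalkFromTo E w j l ∧ w.length = graphDist E j l + 1) ∧ w.Nodup := by
    intro j l
    obtain ⟨w, hw, hlen⟩ := exists_min_walk hconn j l
    have hlen' : w.length = graphDist E j l + 1 := hlen
    by_cases hnd : w.Nodup
    · exact ⟨w, ⟨hw, hlen'⟩, hnd⟩
    · exfalso
      obtain ⟨w', hw', hshort⟩ := shorten_walk hw hnd
      have hne : w' ≠ [] := walk_ne_nil hw'
      have hmem : w'.length - 1 ∈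
          {m | ∃ w'' : List (Fin n), IsWalkFromTo E w'' j l ∧ w''.length = m + 1} :=
        ⟨w', hw', by have := List.length_pos_iff.2 hne; omega⟩
      have hle : graphDist E j l ≤ w'.length - 1 := Nat.sInf_le hmem
      have := List.length_pos_iff.2 hne
      omega
  choose P hP hPnd using h
  exact ⟨P, fun j l _ => hP j l, fun j l => hPnd j l⟩

lemma graphDist_le_diam {j l : Fin n} (hjl : j ≠ l) : graphDist E j l ≤ graphDiam E := by
  apply le_csSup
  · have hsub : {d | ∃ j l : Fin n, j ≠ l ∧ graphDist E j l = d} ⊆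
        Set.range fun q : Fin n × Fin n => graphDist E q.1 q.2 := by
      rintro d ⟨j', l', -, rfl⟩
      exact ⟨(j', l'), rfl⟩
    exact ((Set.finite_range _).subset hsub).bddAbove
  · exact ⟨j, l, hjl, rfl⟩

lemma coveringMaxUtility_le {P : Fin n → Fin n → List (Fin n)}
    (hP : IsShortestPathCovering E P) : coveringMaxUtility E P ≤ maxEdgeUtility E := by
  apply le_csSup
  · have hsub : {u | ∃ P' : Fin n → Fin n → List (Fin n),
        IsShortestPathCovering E P' ∧ coveringMaxUtility E P' = u} ⊆ Set.Iic (n * n) := by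
      rintro u ⟨P', -, rfl⟩
      rw [Set.mem_Iic]
      apply Finset.sup_le
      intro q _
      calc edgeUtility P' q.1 q.2 ≤ (Finset.univ : Finset (Fin n × Fin n)).card :=
            Finset.card_filter_le _ _
        _ = n * n := by simp
    exact BddAbove.mono hsub (bddAbove_Iic)
  · exact ⟨P, hP, rfl⟩

end Covering
set_option maxHeartbeats 1600000 in
lemma key_contraction {n p : ℕ} {E : Fin n → Fin n → Prop}
    (B : Matrix (Fin n) (Fin n) ℝ)
    (hBnn : ∀ i j, 0 ≤ B i j) (hBcol : ∀ j, ∑ i, B i j = 1)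
    (hBcompat : ∀ i j, 0 < B i j ↔ (E j i ∨ j = i))
    (ν π : Fin n → ℝ) (hν : ∀ i, 0 < ν i) (hνsum : ∑ i, ν i = 1)
    (hπexp : ∀ i, π i = ∑ j, B i j * ν j) (hπpos : ∀ i, 0 < π i)
    (y w : Fin n → EuclideanSpace ℝ (Fin p)) (hw : ∀ i, w i = ∑ j, B i j • y j)
    (P : Fin n → Fin n → List (Fin n)) (hPcov : IsShortestPathCovering E P)
    (hPnd : ∀ j l, (P j l).Nodup)
    (a A Pm bm : ℝ) (D K : ℕ)
    (ha_le : ∀ i, a ≤ ν i) (ha_pos : 0 < a)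
    (hA_ge : ∀ i, ν i ≤ A) (hA_pos : 0 < A)
    (hPm_ge : ∀ i, π i ≤ Pm) (hPm_pos : 0 < Pm)
    (hbm_le : ∀ i j, 0 < B i j → bm ≤ B i j) (hbm_pos : 0 < bm)
    (hD_ge : ∀ j l : Fin n, j ≠ l → graphDist E j l ≤ D) (hD1 : 1 ≤ D)
    (hK_ge : coveringMaxUtility E P ≤ K) (hKpos : 0 < K) :
    ∑ i, π i * ‖(π i)⁻¹ • w i - ∑ ℓ, y ℓ‖ ^ 2 ≤
      (1 - a ^ 2 * bm ^ 2 / (A ^ 2 * Pm * (D : ℝ) * (K : ℝ))) *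
        ∑ i, ν i * ‖(ν i)⁻¹ • y i - ∑ ℓ, y ℓ‖ ^ 2 := by
  set S : EuclideanSpace ℝ (Fin p) := ∑ ℓ, y ℓ with hSdef
  set u : Fin n → EuclideanSpace ℝ (Fin p) := fun j => (ν j)⁻¹ • y j - S with hudef
  have hgoal_u : ∀ i : Fin n, (ν i)⁻¹ • y i - S = u i := fun i => rfl
  simp only [hgoal_u]
  set q : Fin n → Fin n → ℝ := fun i j => (π i)⁻¹ * (B i j * ν j) with hqdef
  have hqnn : ∀ i j, 0 ≤ q i j := fun i j =>
    mul_nonneg (inv_nonneg.2 (hπpos i).le) (mul_nonneg (hBnn i j) (hν j).le)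
  have hq1 : ∀ i, ∑ j, q i j = 1 := by
    intro i
    rw [hqdef]
    simp only
    rw [← Finset.mul_sum, ← hπexp i, inv_mul_cancel₀ (hπpos i).ne']
  -- the weighted mean of the u's is 0
  have husum : ∑ j, ν j • u j = (0 : EuclideanSpace ℝ (Fin p)) := by
    have h1 : ∀ j : Fin n, ν j • u j = y j - ν j • S := by
      intro j
      rw [hudef]
      simp only
      rw [smul_sub, smul_smul, mul_inv_cancel₀ (hν j).ne', one_smul]
    rw [Finset.sum_congr rfl fun j _ => h1 j, Finset.sum_sub_distrib, ← Finset.sum_smul,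
      hνsum, one_smul, ← hSdef, sub_self]
  -- expressing the new deviations through q and u
  have hqu : ∀ i, (π i)⁻¹ • w i - S = ∑ j, q i j • u j := by
    intro i
    have h1 : ∀ j : Fin n, q i j • u j =
        (π i)⁻¹ • (B i j • y j) - (π i)⁻¹ • ((B i j * ν j) • S) := by
      intro j
      rw [hqdef, hudef]
      simp only
      rw [smul_sub]
      congr 1
      · rw [smul_smul, smul_smul]
        congr 1
        field_simp
        rw [mul_comm (π i) (ν j), ← div_div, mul_div_cancel_right₀ _ (hν j).ne']
      · rw [smul_smul]
    calc (π i)⁻¹ • w i - S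
        = (π i)⁻¹ • (∑ j, B i j • y j) - (π i)⁻¹ • ((∑ j, B i j * ν j) • S) := by
          rw [← hw i, ← hπexp i, smul_smul, inv_mul_cancel₀ (hπpos i).ne', one_smul]
      _ = ∑ j, ((π i)⁻¹ • (B i j • y j) - (π i)⁻¹ • ((B i j * ν j) • S)) := by
          rw [Finset.sum_sub_distrib, ← Finset.smul_sum, ← Finset.smul_sum, ← Finset.sum_smul]
      _ = ∑ j, q i j • u j := by
          exact (Finset.sum_congr rfl fun j _ => (h1 j).symm)
  set V : ℝ := ∑ j, ν j * ‖u j‖ ^ 2 with hVdef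
  set EE : ℝ := ∑ i, π i * ((1/2) * ∑ j, ∑ l, q i j * q i l * ‖u j - u l‖ ^ 2) with hEEdef
  -- main energy identity
  have hL : ∑ i, π i * ‖(π i)⁻¹ • w i - S‖ ^ 2 = V - EE := by
    have hjen : ∀ i, ‖(π i)⁻¹ • w i - S‖ ^ 2 =
        ∑ j, q i j * ‖u j‖ ^ 2 - (1/2) * ∑ j, ∑ l, q i j * q i l * ‖u j - u l‖ ^ 2 := by
      intro i
      rw [hqu i]
      exact jensen_deficit (q i) u (hq1 i)
    calc ∑ i, π i * ‖(π i)⁻¹ • w i - S‖ ^ 2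
        = ∑ i, ((∑ j, π i * (q i j * ‖u j‖ ^ 2)) -
            π i * ((1/2) * ∑ j, ∑ l, q i j * q i l * ‖u j - u l‖ ^ 2)) := by
          refine Finset.sum_congr rfl fun i _ => ?_
          rw [hjen i, mul_sub, Finset.mul_sum]
      _ = (∑ i, ∑ j, π i * (q i j * ‖u j‖ ^ 2)) - EE := by
          rw [Finset.sum_sub_distrib, hEEdef]
      _ = V - EE := by
          congr 1
          rw [Finset.sum_comm, hVdef]
          refine Finset.sum_congr rfl fun j _ => ?_
          have h2 : ∀ i, π i * (q i j * ‖u j‖ ^ 2) = B i j * ν j * ‖u j‖ ^ 2 := by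
            intro i
            rw [hqdef]
            simp only
            field_simp
            rw [show π i * B i j * ν j * ‖u j‖ ^ 2 = π i * (B i j * ν j * ‖u j‖ ^ 2) by ring]
            exact mul_div_cancel_left₀ _ (hπpos i).ne'
          rw [Finset.sum_congr rfl fun i _ => h2 i, ← Finset.sum_mul, ← Finset.sum_mul,
            hBcol, one_mul]
  -- variance identity
  have h2V : ∑ j, ∑ l, ν j * ν l * ‖u j - u l‖ ^ 2 = 2 * V := by
    have h3 := jensen_deficit ν u hνsum
    rw [husum] at h3
    simp only [norm_zero] at h3
    rw [hVdef]
    nlinarith [h3]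
  -- the edge set
  set F : Finset (Fin n × Fin n) :=
    Finset.univ.filter (fun e : Fin n × Fin n => e.1 ≠ e.2 ∧ E e.1 e.2) with hFdef
  set Sf : ℝ := ∑ e ∈ F, ‖u e.1 - u e.2‖ ^ 2 with hSfdef
  have hSfnn : 0 ≤ Sf := Finset.sum_nonneg fun e _ => by positivity
  -- lower bound for the energy EE in terms of Sf
  have hEE_ge : a ^ 2 * bm ^ 2 / Pm * Sf ≤ 2 * EE := by
    set g : Fin n × Fin n × Fin n → ℝ := fun t =>
      π t.1 * (q t.1 t.2.1 * q t.1 t.2.2 * ‖u t.2.1 - u t.2.2‖ ^ 2) with hgdef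
    have hEE2 : 2 * EE = ∑ t : Fin n × Fin n × Fin n, g t := by
      calc 2 * EE = ∑ i, π i * (∑ j, ∑ l, q i j * q i l * ‖u j - u l‖ ^ 2) := by
            rw [hEEdef, Finset.mul_sum]
            exact Finset.sum_congr rfl fun i _ => by ring
        _ = ∑ i, ∑ j, ∑ l, π i * (q i j * q i l * ‖u j - u l‖ ^ 2) := by
            refine Finset.sum_congr rfl fun i _ => ?_
            rw [Finset.mul_sum]
            exact Finset.sum_congr rfl fun j _ => Finset.mul_sum _ _ _
        _ = ∑ t : Fin n × Fin n × Fin n, g t := by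
            rw [Fintype.sum_prod_type]
            refine Finset.sum_congr rfl fun i _ => ?_
            rw [Fintype.sum_prod_type]
    have hg_nn : ∀ t : Fin n × Fin n × Fin n, 0 ≤ g t := fun t =>
      mul_nonneg (hπpos _).le (mul_nonneg (mul_nonneg (hqnn _ _) (hqnn _ _)) (by positivity))
    have hinj : ∀ e1 ∈ F, ∀ e2 ∈ F,
        ((e1.2, e1.1, e1.2) : Fin n × Fin n × Fin n) = (e2.2, e2.1, e2.2) → e1 = e2 := by
      intro e1 _ e2 _ h
      simp only [Prod.mk.injEq] at h
      exact Prod.ext h.2.1 h.1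
    have h5 : ∑ e ∈ F, g (e.2, e.1, e.2) =
        ∑ t ∈ F.image (fun e : Fin n × Fin n => ((e.2, e.1, e.2) : Fin n × Fin n × Fin n)), g t :=
      (Finset.sum_image hinj).symm
    have himage : ∑ e ∈ F, g (e.2, e.1, e.2) ≤ 2 * EE := by
      rw [hEE2, h5]
      exact Finset.sum_le_sum_of_subset_of_nonneg (Finset.subset_univ _) fun t _ _ => hg_nn t
    refine le_trans ?_ himage
    rw [hSfdef, Finset.mul_sum]
    apply Finset.sum_le_sum
    intro e he
    have heF := he
    rw [hFdef, Finset.mem_filter] at heF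
    obtain ⟨-, hne, hE⟩ := heF
    have hB1 : 0 < B e.2 e.1 := (hBcompat e.2 e.1).2 (Or.inl hE)
    have hB2 : 0 < B e.2 e.2 := (hBcompat e.2 e.2).2 (Or.inr rfl)
    have hb1 : bm * a ≤ B e.2 e.1 * ν e.1 :=
      mul_le_mul (hbm_le _ _ hB1) (ha_le _) ha_pos.le (hBnn _ _)
    have hb2 : bm * a ≤ B e.2 e.2 * ν e.2 :=
      mul_le_mul (hbm_le _ _ hB2) (ha_le _) ha_pos.le (hBnn _ _)
    have hinv : Pm⁻¹ ≤ (π e.2)⁻¹ := by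
      apply inv_anti₀ (hπpos e.2) (hPm_ge e.2)
    have hform : g (e.2, e.1, e.2) =
        (B e.2 e.1 * ν e.1) * (B e.2 e.2 * ν e.2) * (π e.2)⁻¹ * ‖u e.1 - u e.2‖ ^ 2 := by
      rw [hgdef, hqdef]
      simp only
      field_simp [(hπpos e.2).ne']
    rw [hform]
    have hba_nn : 0 ≤ bm * a := by positivity
    calc a ^ 2 * bm ^ 2 / Pm * ‖u e.1 - u e.2‖ ^ 2
        = (bm * a) * (bm * a) * Pm⁻¹ * ‖u e.1 - u e.2‖ ^ 2 := by
          rw [div_eq_mul_inv]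
          ring
      _ ≤ (B e.2 e.1 * ν e.1) * (B e.2 e.2 * ν e.2) * (π e.2)⁻¹ * ‖u e.1 - u e.2‖ ^ 2 := by
          apply mul_le_mul_of_nonneg_right _ (by positivity)
          apply mul_le_mul (mul_le_mul hb1 hb2 hba_nn (le_trans hba_nn hb1)) hinv
            (inv_nonneg.2 hPm_pos.le)
            (mul_nonneg (mul_nonneg (hBnn _ _) (hν _).le) (mul_nonneg (hBnn _ _) (hν _).le))
  -- upper bound for the variance in terms of Sf
  have hV2 : 2 * V ≤ A ^ 2 * (D : ℝ) * (K : ℝ) * Sf := by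
    set Q : Finset (Fin n × Fin n) :=
      Finset.univ.filter (fun e : Fin n × Fin n => e.1 ≠ e.2) with hQdef
    have h6 : 2 * V = ∑ e : Fin n × Fin n, ν e.1 * ν e.2 * ‖u e.1 - u e.2‖ ^ 2 := by
      rw [← h2V, Fintype.sum_prod_type]
    have hsplit : 2 * V = ∑ e ∈ Q, ν e.1 * ν e.2 * ‖u e.1 - u e.2‖ ^ 2 := by
      rw [h6, ← Finset.sum_filter_add_sum_filter_not Finset.univ
        (fun e : Fin n × Fin n => e.1 ≠ e.2)]
      have h7 : ∑ e ∈ Finset.univ.filter (fun e : Fin n × Fin n => ¬ e.1 ≠ e.2),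
          ν e.1 * ν e.2 * ‖u e.1 - u e.2‖ ^ 2 = 0 := by
        apply Finset.sum_eq_zero
        intro e he
        rw [Finset.mem_filter] at he
        have h8 : e.1 = e.2 := not_not.1 he.2
        rw [h8, sub_self, norm_zero]
        ring
      rw [h7, add_zero]
    have hstep2 : ∀ e ∈ Q, ‖u e.1 - u e.2‖ ^ 2 ≤ (D : ℝ) * ∑ e' ∈ F,
        (if edgeInWalk e'.1 e'.2 (P e.1 e.2) then ‖u e'.1 - u e'.2‖ ^ 2 else 0) := by
      intro e he
      rw [hQdef, Finset.mem_filter] at he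
      obtain ⟨-, hne⟩ := he
      obtain ⟨hwalk, hlen⟩ := hPcov e.1 e.2 hne
      have hnd := hPnd e.1 e.2
      set L : List (Fin n × Fin n) := (P e.1 e.2).zip (P e.1 e.2).tail with hLdef
      have htel : u e.1 - u e.2 = (L.map fun q' => u q'.1 - u q'.2).sum :=
        (walk_telescope u (P e.1 e.2) e.1 e.2 hwalk.1 hwalk.2.1).symm
      have hcs : ‖u e.1 - u e.2‖ ^ 2 ≤
          (L.length : ℝ) * (L.map fun q' => ‖u q'.1 - u q'.2‖ ^ 2).sum := by
        rw [htel]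
        have h8 := list_sum_sq_norm_le (L.map fun q' => u q'.1 - u q'.2)
        rw [List.length_map, List.map_map] at h8
        simpa [Function.comp_def] using h8
      have hlen_le : (L.length : ℝ) ≤ (D : ℝ) := by
        have h9 : L.length = (P e.1 e.2).length - 1 := zip_length
        have h10 : (P e.1 e.2).length - 1 = graphDist E e.1 e.2 := by omega
        rw [h9, h10]
        exact_mod_cast hD_ge e.1 e.2 hne
      have hmapsum : (L.map fun q' => ‖u q'.1 - u q'.2‖ ^ 2).sum =
          ∑ e' ∈ F, (if edgeInWalk e'.1 e'.2 (P e.1 e.2) then ‖u e'.1 - u e'.2‖ ^ 2 else 0) := by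
        rw [← List.sum_toFinset _ (zip_nodup hnd)]
        have hset : L.toFinset = F.filter (fun e' => edgeInWalk e'.1 e'.2 (P e.1 e.2)) := by
          ext e'
          rw [List.mem_toFinset, Finset.mem_filter, hFdef, Finset.mem_filter]
          constructor
          · intro h10
            exact ⟨⟨Finset.mem_univ _, mem_zip_ne hnd h10, mem_zip_of_chain hwalk.2.2 h10⟩, h10⟩
          · intro h10
            exact h10.2
        rw [hset, Finset.sum_filter]
      have hmsum_nn : 0 ≤ (L.map fun q' => ‖u q'.1 - u q'.2‖ ^ 2).sum := by
        apply List.sum_nonneg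
        intro x hx
        obtain ⟨v, -, rfl⟩ := List.mem_map.1 hx
        positivity
      calc ‖u e.1 - u e.2‖ ^ 2
          ≤ (L.length : ℝ) * (L.map fun q' => ‖u q'.1 - u q'.2‖ ^ 2).sum := hcs
        _ ≤ (D : ℝ) * (L.map fun q' => ‖u q'.1 - u q'.2‖ ^ 2).sum :=
            mul_le_mul_of_nonneg_right hlen_le hmsum_nn
        _ = (D : ℝ) * ∑ e' ∈ F,
              (if edgeInWalk e'.1 e'.2 (P e.1 e.2) then ‖u e'.1 - u e'.2‖ ^ 2 else 0) := by
            rw [hmapsum]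
    have hswap : ∑ e ∈ Q, (D : ℝ) * ∑ e' ∈ F,
          (if edgeInWalk e'.1 e'.2 (P e.1 e.2) then ‖u e'.1 - u e'.2‖ ^ 2 else 0)
        = (D : ℝ) * ∑ e' ∈ F, ((Finset.univ.filter fun q' : Fin n × Fin n =>
            q'.1 ≠ q'.2 ∧ edgeInWalk e'.1 e'.2 (P q'.1 q'.2)).card : ℝ) *
              ‖u e'.1 - u e'.2‖ ^ 2 := by
      rw [← Finset.mul_sum, Finset.sum_comm]
      congr 1
      refine Finset.sum_congr rfl fun e' _ => ?_
      rw [← Finset.sum_filter, hQdef, Finset.filter_filter, Finset.sum_const, nsmul_eq_mul]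
    have hutil : ∀ e' ∈ F, ((Finset.univ.filter fun q' : Fin n × Fin n =>
        q'.1 ≠ q'.2 ∧ edgeInWalk e'.1 e'.2 (P q'.1 q'.2)).card : ℝ) ≤ (K : ℝ) := by
      intro e' he'
      have h11 : edgeUtility P e'.1 e'.2 ≤ K := by
        refine le_trans ?_ hK_ge
        apply Finset.le_sup (f := fun q : Fin n × Fin n => edgeUtility P q.1 q.2)
        rw [hFdef, Finset.mem_filter] at he'
        exact Finset.mem_filter.2 ⟨Finset.mem_univ _, he'.2.2⟩
      have h12 : (Finset.univ.filter fun q' : Fin n × Fin n =>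
          q'.1 ≠ q'.2 ∧ edgeInWalk e'.1 e'.2 (P q'.1 q'.2)).card = edgeUtility P e'.1 e'.2 := rfl
      rw [h12]
      exact_mod_cast h11
    calc 2 * V = ∑ e ∈ Q, ν e.1 * ν e.2 * ‖u e.1 - u e.2‖ ^ 2 := hsplit
      _ ≤ ∑ e ∈ Q, A ^ 2 * ((D : ℝ) * ∑ e' ∈ F,
            (if edgeInWalk e'.1 e'.2 (P e.1 e.2) then ‖u e'.1 - u e'.2‖ ^ 2 else 0)) := by
          apply Finset.sum_le_sum
          intro e he
          have hννA : ν e.1 * ν e.2 ≤ A ^ 2 := by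
            rw [sq]
            exact mul_le_mul (hA_ge _) (hA_ge _) (hν _).le hA_pos.le
          calc ν e.1 * ν e.2 * ‖u e.1 - u e.2‖ ^ 2
              ≤ A ^ 2 * ‖u e.1 - u e.2‖ ^ 2 :=
                mul_le_mul_of_nonneg_right hννA (by positivity)
            _ ≤ A ^ 2 * ((D : ℝ) * ∑ e' ∈ F,
                  (if edgeInWalk e'.1 e'.2 (P e.1 e.2) then ‖u e'.1 - u e'.2‖ ^ 2 else 0)) :=
                mul_le_mul_of_nonneg_left (hstep2 e he) (by positivity)
      _ = A ^ 2 * ∑ e ∈ Q, (D : ℝ) * ∑ e' ∈ F,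
            (if edgeInWalk e'.1 e'.2 (P e.1 e.2) then ‖u e'.1 - u e'.2‖ ^ 2 else 0) :=
          (Finset.mul_sum _ _ _).symm
      _ = A ^ 2 * ((D : ℝ) * ∑ e' ∈ F, ((Finset.univ.filter fun q' : Fin n × Fin n =>
            q'.1 ≠ q'.2 ∧ edgeInWalk e'.1 e'.2 (P q'.1 q'.2)).card : ℝ) *
              ‖u e'.1 - u e'.2‖ ^ 2) := by rw [hswap]
      _ ≤ A ^ 2 * ((D : ℝ) * ∑ e' ∈ F, (K : ℝ) * ‖u e'.1 - u e'.2‖ ^ 2) := by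
          apply mul_le_mul_of_nonneg_left _ (by positivity)
          apply mul_le_mul_of_nonneg_left _ (by positivity)
          apply Finset.sum_le_sum
          intro e' he'
          exact mul_le_mul_of_nonneg_right (hutil e' he') (by positivity)
      _ = A ^ 2 * (D : ℝ) * (K : ℝ) * Sf := by
          rw [hSfdef, ← Finset.mul_sum]
          ring
  -- conclusion
  have hDpos : (0:ℝ) < (D : ℝ) := by exact_mod_cast hD1
  have hKpos' : (0:ℝ) < (K : ℝ) := by exact_mod_cast hKpos
  set c : ℝ := a ^ 2 * bm ^ 2 / (A ^ 2 * Pm * (D : ℝ) * (K : ℝ)) with hcdef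
  have hc_nn : 0 ≤ c := by positivity
  have hcalc : c * (A ^ 2 * (D : ℝ) * (K : ℝ) * Sf) = a ^ 2 * bm ^ 2 / Pm * Sf := by
    rw [hcdef]
    field_simp
  have hcV : c * (2 * V) ≤ 2 * EE := by
    calc c * (2 * V) ≤ c * (A ^ 2 * (D : ℝ) * (K : ℝ) * Sf) :=
          mul_le_mul_of_nonneg_left hV2 hc_nn
      _ = a ^ 2 * bm ^ 2 / Pm * Sf := hcalc
      _ ≤ 2 * EE := hEE_ge
  rw [hL]
  nlinarith [hcV]
set_option maxHeartbeats 1600000 in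
theorem stmt_11 {n p : ℕ} (hn : 1 < n) (E : Fin n → Fin n → Prop)
    (hconn : StronglyConnectedDigraph E)
    (B : Matrix (Fin n) (Fin n) ℝ)
    (hBnn : ∀ i j, 0 ≤ B i j)
    (hBcol : ∀ j, ∑ i, B i j = 1)
    (hBcompat : ∀ i j, 0 < B i j ↔ (E j i ∨ j = i))
    (ν : Fin n → ℝ) (hν : ∀ i, 0 < ν i) (hνsum : ∑ i, ν i = 1)
    (π : Fin n → ℝ) (hπ : π = B.mulVec ν)
    (y : Fin n → EuclideanSpace ℝ (Fin p))
    (w : Fin n → EuclideanSpace ℝ (Fin p)) (hw : ∀ i, w i = ∑ j, B i j • y j)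
    (τ : ℝ)
    (hτ : τ = Real.sqrt (1 - (⨅ i, ν i) ^ 2 * minPosEntry B ^ 2 /
      ((⨆ i, ν i) ^ 2 * (⨆ i, π i) * (graphDiam E : ℝ) * (maxEdgeUtility E : ℝ)))) :
    τ ∈ Set.Ioo (0 : ℝ) 1 ∧
      Real.sqrt (∑ i, π i * ‖(π i)⁻¹ • w i - ∑ ℓ, y ℓ‖ ^ 2) ≤
        τ * Real.sqrt (∑ i, ν i * ‖(ν i)⁻¹ • y i - ∑ ℓ, y ℓ‖ ^ 2) := by
  haveI : Nonempty (Fin n) := ⟨⟨0, by omega⟩⟩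
  -- notation
  set S : EuclideanSpace ℝ (Fin p) := ∑ ℓ, y ℓ with hSdef
  set a : ℝ := ⨅ i, ν i with hadef
  set A : ℝ := ⨆ i, ν i with hAdef
  set Pm : ℝ := ⨆ i, π i with hPmdef
  set bm : ℝ := minPosEntry B with hbmdef
  set D : ℕ := graphDiam E with hDdef
  set K : ℕ := maxEdgeUtility E with hKdef
  set c : ℝ := a ^ 2 * bm ^ 2 / (A ^ 2 * Pm * (D : ℝ) * (K : ℝ)) with hcdef
  have hτc : τ = Real.sqrt (1 - c) := hτ
  -- basic facts about B, π, ν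
  have hBd : ∀ i, 0 < B i i := fun i => (hBcompat i i).2 (Or.inr rfl)
  have hπexp : ∀ i, π i = ∑ j, B i j * ν j := by
    intro i; rw [hπ]; simp [Matrix.mulVec, dotProduct]
  have hπpos : ∀ i, 0 < π i := by
    intro i
    rw [hπexp]
    exact Finset.sum_pos' (fun j _ => mul_nonneg (hBnn i j) (hν j).le)
      ⟨i, Finset.mem_univ i, mul_pos (hBd i) (hν i)⟩
  have hπsum : ∑ i, π i = 1 := by
    simp_rw [hπexp]
    rw [Finset.sum_comm]
    simp_rw [← Finset.sum_mul, hBcol]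
    simpa using hνsum
  have ha_le : ∀ i, a ≤ ν i := fun i => ciInf_le (Finite.bddBelow_range ν) i
  have ha_pos : 0 < a := by
    obtain ⟨i0, -, hi0⟩ := Finset.exists_min_image Finset.univ ν ⟨Classical.arbitrary _, Finset.mem_univ _⟩
    have : ν i0 ≤ a := le_ciInf fun i => hi0 i (Finset.mem_univ i)
    linarith [hν i0]
  have hA_ge : ∀ i, ν i ≤ A := fun i => le_ciSup (Set.finite_range ν).bddAbove i
  have hA_pos : 0 < A := lt_of_lt_of_le (hν (Classical.arbitrary _)) (hA_ge _)
  have haA : a ≤ A := (ha_le (Classical.arbitrary _)).trans (hA_ge _)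
  have hPm_ge : ∀ i, π i ≤ Pm := fun i => le_ciSup (Set.finite_range π).bddAbove i
  have hPm_pos : 0 < Pm := lt_of_lt_of_le (hπpos (Classical.arbitrary _)) (hPm_ge _)
  have hnPm : 1 ≤ (n : ℝ) * Pm := by
    have h1 : (1:ℝ) = ∑ i, π i := hπsum.symm
    have h2 : ∑ i, π i ≤ ∑ _i : Fin n, Pm := Finset.sum_le_sum fun i _ => hPm_ge i
    rw [Finset.sum_const, Finset.card_univ, Fintype.card_fin, nsmul_eq_mul] at h2
    linarith
  -- minimal positive entry
  have hbm_facts : 0 < bm ∧ ∀ i j, 0 < B i j → bm ≤ B i j := by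
    have hsub : {v : ℝ | 0 < v ∧ ∃ i j, B i j = v} ⊆
        Set.range fun q : Fin n × Fin n => B q.1 q.2 := by
      rintro v ⟨-, i, j, rfl⟩; exact ⟨(i, j), rfl⟩
    have hfin : {v : ℝ | 0 < v ∧ ∃ i j, B i j = v}.Finite := (Set.finite_range _).subset hsub
    have hne : {v : ℝ | 0 < v ∧ ∃ i j, B i j = v}.Nonempty :=
      ⟨B (Classical.arbitrary _) (Classical.arbitrary _),
        hBd (Classical.arbitrary _), Classical.arbitrary _, Classical.arbitrary _, rfl⟩
    have hbdd : BddBelow {v : ℝ | 0 < v ∧ ∃ i j, B i j = v} := hfin.bddBelow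
    constructor
    · exact (hne.csInf_mem hfin).1
    · intro i j hij
      exact csInf_le hbdd ⟨hij, i, j, rfl⟩
  obtain ⟨hbm_pos, hbm_le⟩ := hbm_facts
  -- the covering
  obtain ⟨P, hPcov, hPnd⟩ := exists_good_covering hconn
  have hKP : coveringMaxUtility E P ≤ K := coveringMaxUtility_le hPcov
  have hD1 : 1 ≤ D := by
    have h01 : (⟨0, by omega⟩ : Fin n) ≠ ⟨1, by omega⟩ := by
      intro h; simpa using congrArg Fin.val h
    exact le_trans (one_le_graphDist hconn h01) (graphDist_le_diam h01)
  -- edge set and column support counting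
  set F : Finset (Fin n × Fin n) :=
    Finset.univ.filter (fun q : Fin n × Fin n => q.1 ≠ q.2 ∧ E q.1 q.2) with hFdef
  set s : ℕ := Finset.univ.sup
    (fun j : Fin n => (Finset.univ.filter fun i => 0 < B i j).card) with hsdef
  have hs_col : ∀ j : Fin n, (Finset.univ.filter fun i => 0 < B i j).card ≤ s := by
    intro j
    rw [hsdef]
    exact Finset.le_sup (f := fun j : Fin n => (Finset.univ.filter fun i => 0 < B i j).card)
      (Finset.mem_univ j)
  have hs2 : 2 ≤ s := by
    have h01 : (⟨0, by omega⟩ : Fin n) ≠ ⟨1, by omega⟩ := by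
      intro h; simpa using congrArg Fin.val h
    obtain ⟨wlk, hwlk⟩ := hconn ⟨0, by omega⟩ ⟨1, by omega⟩
    obtain ⟨α, β, hab, hmem⟩ := walk_exists_edge_mem wlk _ _ h01 hwlk
    have hEab : E α β := mem_zip_of_chain hwlk.2.2 hmem
    have hBba : 0 < B β α := (hBcompat β α).2 (Or.inl hEab)
    have hsub : ({β, α} : Finset (Fin n)) ⊆ Finset.univ.filter fun i => 0 < B i α := by
      intro x hx
      simp only [Finset.mem_insert, Finset.mem_singleton] at hx
      rcases hx with h | h
      · rw [h]; exact Finset.mem_filter.2 ⟨Finset.mem_univ _, hBba⟩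
      · rw [h]; exact Finset.mem_filter.2 ⟨Finset.mem_univ _, hBd α⟩
    have hcard : ({β, α} : Finset (Fin n)).card = 2 := by
      rw [Finset.card_insert_of_notMem (by simpa using hab.symm), Finset.card_singleton]
    calc 2 = ({β, α} : Finset (Fin n)).card := hcard.symm
      _ ≤ (Finset.univ.filter fun i => 0 < B i α).card := Finset.card_le_card hsub
      _ ≤ s := hs_col α
  have hbms : (s : ℝ) * bm ≤ 1 := by
    obtain ⟨j0, -, hj0⟩ := Finset.exists_mem_eq_sup Finset.univ
      ⟨Classical.arbitrary _, Finset.mem_univ _⟩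
      (fun j : Fin n => (Finset.univ.filter fun i => 0 < B i j).card)
    have hsum : ∑ i ∈ Finset.univ.filter (fun i => 0 < B i j0), B i j0 ≤ 1 := by
      rw [← hBcol j0]
      apply Finset.sum_le_sum_of_subset_of_nonneg (Finset.filter_subset _ _)
      intro i _ _
      exact hBnn i j0
    have hlow : ((Finset.univ.filter fun i => 0 < B i j0).card : ℝ) * bm ≤
        ∑ i ∈ Finset.univ.filter (fun i => 0 < B i j0), B i j0 := by
      rw [← nsmul_eq_mul]
      apply Finset.card_nsmul_le_sum
      intro i hi
      exact hbm_le i j0 (Finset.mem_filter.1 hi).2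
    have hseq : s = (Finset.univ.filter fun i => 0 < B i j0).card := by rw [hsdef, hj0]
    rw [hseq]
    linarith
  have hFcard : F.card ≤ n * (s - 1) := by
    have hsub : F ⊆ Finset.univ.biUnion (fun t : Fin n =>
        ({t} : Finset (Fin n)) ×ˢ ((Finset.univ.filter fun i => 0 < B i t).erase t)) := by
      intro e he
      rw [hFdef, Finset.mem_filter] at he
      obtain ⟨-, hne, hE⟩ := he
      apply Finset.mem_biUnion.2
      refine ⟨e.1, Finset.mem_univ _, ?_⟩
      rw [Finset.mem_product]
      refine ⟨by simp, Finset.mem_erase.2 ⟨fun h => hne (h ▸ rfl), ?_⟩⟩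
      exact Finset.mem_filter.2 ⟨Finset.mem_univ _, (hBcompat e.2 e.1).2 (Or.inl hE)⟩
    calc F.card ≤ ∑ t : Fin n,
          (({t} : Finset (Fin n)) ×ˢ ((Finset.univ.filter fun i => 0 < B i t).erase t)).card :=
        le_trans (Finset.card_le_card hsub) Finset.card_biUnion_le
      _ ≤ ∑ _t : Fin n, (s - 1) := by
          apply Finset.sum_le_sum
          intro t _
          rw [Finset.card_product, Finset.card_singleton, one_mul,
            Finset.card_erase_of_mem
              (show t ∈ Finset.univ.filter (fun i => 0 < B i t) from
                Finset.mem_filter.2 ⟨Finset.mem_univ _, hBd t⟩)]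
          exact Nat.sub_le_sub_right (hs_col t) 1
      _ = n * (s - 1) := by rw [Finset.sum_const, Finset.card_univ, Fintype.card_fin, smul_eq_mul]
  have hcount : n * n - n ≤ F.card * coveringMaxUtility E P := by
    have hQcard : (Finset.univ.filter fun q : Fin n × Fin n => q.1 ≠ q.2).card = n * n - n := by
      have hQ : (Finset.univ.filter fun q : Fin n × Fin n => q.1 ≠ q.2) =
          (Finset.univ : Finset (Fin n)).offDiag := by
        ext q
        simp [Finset.mem_offDiag]
      rw [hQ, Finset.offDiag_card]
      simp
    have hsub : (Finset.univ.filter fun q : Fin n × Fin n => q.1 ≠ q.2) ⊆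
        F.biUnion (fun e => Finset.univ.filter fun q : Fin n × Fin n =>
          q.1 ≠ q.2 ∧ edgeInWalk e.1 e.2 (P q.1 q.2)) := by
      intro q hq
      rw [Finset.mem_filter] at hq
      obtain ⟨-, hne⟩ := hq
      obtain ⟨hwalk, -⟩ := hPcov q.1 q.2 hne
      obtain ⟨α, β, hab, hmem⟩ := walk_exists_edge_mem (P q.1 q.2) q.1 q.2 hne hwalk
      have hE : E α β := mem_zip_of_chain hwalk.2.2 hmem
      apply Finset.mem_biUnion.2
      exact ⟨(α, β), by rw [hFdef]; exact Finset.mem_filter.2 ⟨Finset.mem_univ _, hab, hE⟩,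
        Finset.mem_filter.2 ⟨Finset.mem_univ _, hne, hmem⟩⟩
    calc n * n - n
        = (Finset.univ.filter fun q : Fin n × Fin n => q.1 ≠ q.2).card := hQcard.symm
      _ ≤ ∑ e ∈ F, (Finset.univ.filter fun q : Fin n × Fin n =>
          q.1 ≠ q.2 ∧ edgeInWalk e.1 e.2 (P q.1 q.2)).card :=
        le_trans (Finset.card_le_card hsub) Finset.card_biUnion_le
      _ ≤ ∑ _e ∈ F, coveringMaxUtility E P := by
          apply Finset.sum_le_sum
          intro e he
          have h1 : edgeUtility P e.1 e.2 ≤ coveringMaxUtility E P := by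
            apply Finset.le_sup (f := fun q : Fin n × Fin n => edgeUtility P q.1 q.2)
            rw [hFdef, Finset.mem_filter] at he
            exact Finset.mem_filter.2 ⟨Finset.mem_univ _, he.2.2⟩
          exact h1
      _ = F.card * coveringMaxUtility E P := by rw [Finset.sum_const, smul_eq_mul]
  -- part 1 : τ ∈ (0,1)
  have hKpos : 0 < K := by
    have h1 : 0 < n * n - n := by
      have h2 : 2 * n ≤ n * n := by nlinarith
      omega
    have h2 : 0 < F.card * coveringMaxUtility E P := lt_of_lt_of_le h1 hcount
    have h3 : 0 < coveringMaxUtility E P := by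
      rcases Nat.eq_zero_or_pos (coveringMaxUtility E P) with h0 | h4
      · rw [h0, Nat.mul_zero] at h2; exact absurd h2 (lt_irrefl 0)
      · exact h4
    exact lt_of_lt_of_le h3 hKP
  have hc_num_lt : a ^ 2 * bm ^ 2 < A ^ 2 * Pm * (D : ℝ) * (K : ℝ) := by
    have hN2 : (2:ℝ) ≤ (n:ℝ) := by exact_mod_cast hn
    have hS2 : (2:ℝ) ≤ (s:ℝ) := by exact_mod_cast hs2
    have hD1' : (1:ℝ) ≤ (D:ℝ) := by exact_mod_cast hD1
    have hK0 : (0:ℝ) < (K:ℝ) := by exact_mod_cast hKpos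
    have hNpos : (0:ℝ) < (n:ℝ) := by linarith
    have hSpos : (0:ℝ) < (s:ℝ) := by linarith
    have hS1pos : (0:ℝ) < (s:ℝ) - 1 := by linarith
    have hNS1 : (0:ℝ) < (n:ℝ) * ((s:ℝ) - 1) := mul_pos hNpos hS1pos
    have hNK : (n:ℝ) * (n:ℝ) - (n:ℝ) ≤ ((n:ℝ) * ((s:ℝ) - 1)) * (K:ℝ) := by
      have h1 : n * n - n ≤ (n * (s - 1)) * K :=
        le_trans hcount (Nat.mul_le_mul hFcard hKP)
      have h2 : ((n * n - n : ℕ) : ℝ) ≤ ((n * (s - 1) * K : ℕ) : ℝ) := by exact_mod_cast h1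
      have e1 : ((n * n - n : ℕ) : ℝ) = (n:ℝ) * (n:ℝ) - (n:ℝ) := by
        rw [Nat.cast_sub (by nlinarith : n ≤ n * n)]
        push_cast
        ring
      have e2 : ((n * (s - 1) * K : ℕ) : ℝ) = ((n:ℝ) * ((s:ℝ) - 1)) * (K:ℝ) := by
        rw [Nat.cast_mul, Nat.cast_mul, Nat.cast_sub (by omega : 1 ≤ s)]
        push_cast
        ring
      rw [e1, e2] at h2
      exact h2
    have hbm_le_s : bm ≤ 1 / (s:ℝ) := by
      rw [le_div_iff₀ hSpos]
      linarith
    have hK_ge : ((n:ℝ) * (n:ℝ) - (n:ℝ)) / ((n:ℝ) * ((s:ℝ) - 1)) ≤ (K:ℝ) := by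
      rw [div_le_iff₀ hNS1]
      linarith
    have hPm_ge_n : 1 / (n:ℝ) ≤ Pm := by
      rw [div_le_iff₀ hNpos]
      linarith
    have key : 1 / ((s:ℝ)^2) <
        ((n:ℝ) * (n:ℝ) - (n:ℝ)) / ((n:ℝ) * ((n:ℝ) * ((s:ℝ) - 1))) := by
      rw [div_lt_div_iff₀ (by positivity) (mul_pos hNpos hNS1)]
      nlinarith [mul_nonneg (by linarith : (0:ℝ) ≤ (n:ℝ) - 2)
        (by nlinarith : (0:ℝ) ≤ (s:ℝ)^2 - (s:ℝ) + 1), sq_nonneg ((s:ℝ) - 1)]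
    have hchain : bm ^ 2 ≤ 1 / ((s:ℝ)^2) := by
      have h3 : bm ^ 2 ≤ (1 / (s:ℝ)) ^ 2 := by
        apply pow_le_pow_left₀ hbm_pos.le hbm_le_s
      rwa [div_pow, one_pow] at h3
    have hXnn : (0:ℝ) ≤ ((n:ℝ) * (n:ℝ) - (n:ℝ)) / ((n:ℝ) * ((s:ℝ) - 1)) := by
      apply div_nonneg (by nlinarith) hNS1.le
    have hfin2 : ((n:ℝ) * (n:ℝ) - (n:ℝ)) / ((n:ℝ) * ((n:ℝ) * ((s:ℝ) - 1))) ≤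
        Pm * (D:ℝ) * (K:ℝ) := by
      have hN0 : (n:ℝ) ≠ 0 := by linarith
      have hSg1 : (s:ℝ) - 1 ≠ 0 := by linarith
      calc ((n:ℝ) * (n:ℝ) - (n:ℝ)) / ((n:ℝ) * ((n:ℝ) * ((s:ℝ) - 1)))
          = (1 / (n:ℝ)) * (((n:ℝ) * (n:ℝ) - (n:ℝ)) / ((n:ℝ) * ((s:ℝ) - 1))) := by
            field_simp
        _ ≤ Pm * (((n:ℝ) * (n:ℝ) - (n:ℝ)) / ((n:ℝ) * ((s:ℝ) - 1))) :=
            mul_le_mul_of_nonneg_right hPm_ge_n hXnn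
        _ ≤ Pm * (K:ℝ) := mul_le_mul_of_nonneg_left hK_ge hPm_pos.le
        _ ≤ Pm * ((D:ℝ) * (K:ℝ)) := by
            apply mul_le_mul_of_nonneg_left _ hPm_pos.le
            nlinarith
        _ = Pm * (D:ℝ) * (K:ℝ) := by ring
    have h2 : bm ^ 2 < Pm * (D:ℝ) * (K:ℝ) := lt_of_le_of_lt hchain (lt_of_lt_of_le key hfin2)
    have h1 : a ^ 2 ≤ A ^ 2 := pow_le_pow_left₀ ha_pos.le haA 2
    calc a ^ 2 * bm ^ 2 ≤ A ^ 2 * bm ^ 2 := by nlinarith [sq_nonneg bm]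
      _ < A ^ 2 * (Pm * (D:ℝ) * (K:ℝ)) := by
          apply mul_lt_mul_of_pos_left h2 (by positivity)
      _ = A ^ 2 * Pm * (D:ℝ) * (K:ℝ) := by ring
  have hc_pos : 0 < c := by
    apply div_pos
    · positivity
    · have : (0:ℝ) < D := by exact_mod_cast hD1
      have hK0 : (0:ℝ) < K := by exact_mod_cast hKpos
      positivity
  have hc_lt : c < 1 := by
    rw [hcdef, div_lt_one]
    · exact hc_num_lt
    · have : (0:ℝ) < D := by exact_mod_cast hD1
      have hK0 : (0:ℝ) < K := by exact_mod_cast hKpos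
      positivity
  have hpart1 : τ ∈ Set.Ioo (0:ℝ) 1 := by
    constructor
    · rw [hτc]
      exact Real.sqrt_pos.2 (by linarith)
    · rw [hτc]
      have h1 : 1 - c < 1 := by linarith
      calc Real.sqrt (1 - c) < Real.sqrt 1 := by
            apply Real.sqrt_lt_sqrt (by linarith) h1
        _ = 1 := Real.sqrt_one
  -- part 2
  have hdist_le : ∀ j l : Fin n, j ≠ l → graphDist E j l ≤ D :=
    fun j l h => graphDist_le_diam h
  have hcontr := key_contraction B hBnn hBcol hBcompat ν π hν hνsum hπexp hπpos y w hw
    P hPcov hPnd a A Pm bm D K ha_le ha_pos hA_ge hA_pos hPm_ge hPm_pos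
    hbm_le hbm_pos hdist_le hD1 hKP hKpos
  refine ⟨hpart1, ?_⟩
  have h1c : 0 ≤ 1 - c := by linarith
  calc Real.sqrt (∑ i, π i * ‖(π i)⁻¹ • w i - S‖ ^ 2)
      ≤ Real.sqrt ((1 - c) * ∑ i, ν i * ‖(ν i)⁻¹ • y i - S‖ ^ 2) := Real.sqrt_le_sqrt hcontr
    _ = Real.sqrt (1 - c) * Real.sqrt (∑ i, ν i * ‖(ν i)⁻¹ • y i - S‖ ^ 2) :=
        Real.sqrt_mul h1c _
    _ = τ * Real.sqrt (∑ i, ν i * ‖(ν i)⁻¹ • y i - S‖ ^ 2) := by rw [hτc]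
end
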